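/- arXiv:1503.01746 — 5 statements merged into one kernel-verified Lean document; each statement's English description precedes it below -/
import Mathlib

section
/- Let f : [a,b] → ℝ be a regulated function and let c > 0. Then the functions y ↦ u_c^y(f,[a,b]) and y ↦ d_c^y(f,[a,b]) from ℝ to ℝ are pointwise limits of sequences of step functions on ℝ (a step function on ℝ being a function that is piecewise constant with respect to some finite partition of ℝ into intervals); in particular both functions are Borel measurable. -/
open MeasureTheory Filter Set
open scoped ENNReal NNReal

noncomputable section

/-- The truncated variation `TTV^c(f,[a,b])`. -/
def TTV (f : ℝ → ℝ) (a b c : ℝ) : ℝ≥0∞ :=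
  ⨆ (n : ℕ) (t : Fin (n + 1) → ℝ) (_ : StrictMono t) (_ : ∀ i, t i ∈ Set.Icc a b),
    ∑ i : Fin n, ENNReal.ofReal (|f (t i.succ) - f (t i.castSucc)| - c)

/-- The upward truncated variation `UTV^c(f,[a,b])`. -/
def UTV (f : ℝ → ℝ) (a b c : ℝ) : ℝ≥0∞ :=
  ⨆ (n : ℕ) (t : Fin (n + 1) → ℝ) (_ : StrictMono t) (_ : ∀ i, t i ∈ Set.Icc a b),
    ∑ i : Fin n, ENNReal.ofReal (f (t i.succ) - f (t i.castSucc) - c)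

/-- The downward truncated variation `DTV^c(f,[a,b])`. -/
def DTV (f : ℝ → ℝ) (a b c : ℝ) : ℝ≥0∞ :=
  ⨆ (n : ℕ) (t : Fin (n + 1) → ℝ) (_ : StrictMono t) (_ : ∀ i, t i ∈ Set.Icc a b),
    ∑ i : Fin n, ENNReal.ofReal (f (t i.castSucc) - f (t i.succ) - c)

/-- The alternating sequence of hitting times used to count crossings: starting from `a`,
`crossingTimes f b p q a (n+1)` is the infimum (in `EReal`, so `inf ∅ = +∞`) of the times
`t ∈ (previous time, b]` at which `f t` satisfies `p` (for even `n`) or `q` (for odd `n`). -/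
def crossingTimes (f : ℝ → ℝ) (b : ℝ) (p q : ℝ → Prop) (a : ℝ) : ℕ → EReal
  | 0 => (a : EReal)
  | n + 1 =>
      sInf {x : EReal | ∃ t : ℝ, x = (t : EReal) ∧
        crossingTimes f b p q a n < (t : EReal) ∧ t ≤ b ∧
        (if n % 2 = 0 then p (f t) else q (f t))}

/-- `u_c^y(f,[a,b])`: the number of upcrossings by `f` of the segment `[y, y+c]` on `[a,b]`,
i.e. the largest `n` (possibly `∞`) such that `σ̃_n ≤ b`, where `σ̃₀ = a`,
`τ̃_n = inf{t ∈ (σ̃_n, b] : f t < y}` and `σ̃_{n+1} = inf{t ∈ (τ̃_n, b] : f t > y + c}`. -/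
def upcross (f : ℝ → ℝ) (a b c y : ℝ) : ℝ≥0∞ :=
  ⨆ (n : ℕ) (_ : crossingTimes f b (fun r => r < y) (fun r => y + c < r) a (2 * n) ≤ (b : EReal)),
    (n : ℝ≥0∞)

/-- `d_c^y(f,[a,b])`: the number of downcrossings by `f` of the segment `[y, y+c]` on `[a,b]`,
i.e. the largest `n` (possibly `∞`) such that `σ_n ≤ b`, where `σ₀ = a`,
`τ_n = inf{t ∈ (σ_n, b] : f t > y + c}` and `σ_{n+1} = inf{t ∈ (τ_n, b] : f t < y}`. -/
def downcross (f : ℝ → ℝ) (a b c y : ℝ) : ℝ≥0∞ :=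
  ⨆ (n : ℕ) (_ : crossingTimes f b (fun r => y + c < r) (fun r => r < y) a (2 * n) ≤ (b : EReal)),
    (n : ℝ≥0∞)

/-- A function is regulated on `[a,b]` if it has right limits on `[a,b)` and left limits
on `(a,b]`. -/
def Regulated (f : ℝ → ℝ) (a b : ℝ) : Prop :=
  (∀ t ∈ Set.Ico a b, ∃ L : ℝ, Tendsto f (nhdsWithin t (Set.Ioi t)) (nhds L)) ∧
  (∀ t ∈ Set.Ioc a b, ∃ L : ℝ, Tendsto f (nhdsWithin t (Set.Iio t)) (nhds L))

/-- A step function on `ℝ`: piecewise constant with respect to a finite partition of `ℝ`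
into intervals; equivalently, there is a finite set `s` such that the function is constant
on every interval avoiding `s`. -/
def IsStepFunction (g : ℝ → ℝ) : Prop :=
  ∃ s : Finset ℝ, ∀ x y : ℝ, x ≤ y → (∀ z ∈ Set.Icc x y, z ∉ s) → g x = g y

/-- A standard Brownian motion: continuous paths started at `0`, with independent increments,
the increment on `[s,t]` being centered Gaussian with variance `t - s`. -/
structure IsBrownianMotion {Ω : Type*} [MeasurableSpace Ω] (P : Measure Ω)
    (B : Ω → ℝ → ℝ) : Prop where
  isProb : IsProbabilityMeasure P
  cont : ∀ ω, ContinuousOn (B ω) (Set.Ici 0)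
  init : ∀ ω, B ω 0 = 0
  meas : ∀ t : ℝ, Measurable fun ω => B ω t
  indep : ∀ (n : ℕ) (t : Fin (n + 1) → ℝ), Monotone t → 0 ≤ t 0 →
    ProbabilityTheory.iIndepFun
      (fun i : Fin n => fun ω => B ω (t i.succ) - B ω (t i.castSucc)) P
  gauss : ∀ s t : ℝ, 0 ≤ s → s ≤ t →
    Measure.map (fun ω => B ω t - B ω s) P
      = ProbabilityTheory.gaussianReal 0 (Real.toNNReal (t - s))

/-- The exponential distribution with rate `v` (density `v * exp (-v*t)` on `[0,∞)`). -/
def expMeasure (v : ℝ) : Measure ℝ :=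
  volume.withDensity fun t => ENNReal.ofReal (if 0 ≤ t then v * Real.exp (-v * t) else 0)

end

/-!
By construction of the hitting times, `u_c^y(f,[a,b]) ≥ n` exactly when `(a, b]` contains `2n`
increasing points at which `f` is alternately `< y` and `> y + c`. Consecutive points of such a
chain have values more than `c` apart, so the one-sided limits and compactness of `[a, b]` bound
the length of chains uniformly in `y`.

Every chain can be moved into one countable set: the rationals, `b`, and the points that are
isolated from the right in some level set `{f < q}` or `{-f < q}`, `q ∈ ℚ`. Indeed, at a chain
point `u < b` with `f u < y`, either the right limit is `< y` and rationals just right of `u` will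
do, or it is `≥ y > q > f u` for a rational `q`, and `u` is right-isolated in `{f < q}`. Counting
chains inside the first `n` points of an enumeration of this set gives a step function of `y` (it
jumps only at the values `f t` and `f t - c`), and these counts are eventually equal to the
supremum over all chains. Downcrossings of `f` are upcrossings of `-f`.
-/

open Topology

structure IsAltChain (f : ℝ → ℝ) (a b : ℝ) (p q : ℝ → Prop) {m : ℕ} (w : Fin m → ℝ) : Prop where
  strictMono : StrictMono w
  mem_Ioc : ∀ i, w i ∈ Ioc a b
  alt : ∀ i : Fin m, if (i : ℕ) % 2 = 0 then p (f (w i)) else q (f (w i))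

section CrossingTimes

variable {f : ℝ → ℝ} {a b : ℝ} {p q : ℝ → Prop} {m : ℕ}

theorem isAltChain_fin_zero (w : Fin 0 → ℝ) : IsAltChain f a b p q w :=
  ⟨fun i => i.elim0, fun i => i.elim0, fun i => i.elim0⟩

theorem IsAltChain.snoc {w : Fin m → ℝ} (hw : IsAltChain f a b p q w) {t : ℝ}
    (hwt : ∀ i, w i < t) (ht : t ∈ Ioc a b) (hpq : if m % 2 = 0 then p (f t) else q (f t)) :
    IsAltChain f a b p q (Fin.snoc (α := fun _ => ℝ) w t) where
  strictMono := by
    intro i j hij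
    induction j using Fin.lastCases with
    | last =>
      obtain ⟨i, rfl⟩ := Fin.exists_castSucc_eq.2 hij.ne
      simpa using hwt i
    | cast j =>
      obtain ⟨i, rfl⟩ := Fin.exists_castSucc_eq.2 (hij.trans (Fin.castSucc_lt_last j)).ne
      simpa using hw.strictMono (Fin.castSucc_lt_castSucc_iff.1 hij)
  mem_Ioc i := by
    induction i using Fin.lastCases with
    | last => simpa using ht
    | cast i => simpa using hw.mem_Ioc i
  alt i := by
    induction i using Fin.lastCases with
    | last => simpa using hpq
    | cast i => simpa using hw.alt i

theorem IsAltChain.init {w : Fin (m + 1) → ℝ} (hw : IsAltChain f a b p q w) :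
    IsAltChain f a b p q (Fin.init w) :=
  ⟨hw.strictMono.comp Fin.strictMono_castSucc, fun _ => hw.mem_Ioc _,
    fun i => hw.alt i.castSucc⟩

theorem IsAltChain.imp {p' q' : ℝ → Prop} {w : Fin m → ℝ} (hw : IsAltChain f a b p q w)
    (hp : ∀ i, p (f (w i)) → p' (f (w i))) (hq : ∀ i, q (f (w i)) → q' (f (w i))) :
    IsAltChain f a b p' q' w :=
  ⟨hw.strictMono, hw.mem_Ioc, fun i => by
    have := hw.alt i
    split_ifs at this ⊢
    exacts [hp i this, hq i this]⟩

theorem crossingTimes_mono : Monotone (crossingTimes f b p q a) :=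
  monotone_nat_of_le_succ fun _ => le_sInf <| by
    rintro x ⟨t, rfl, ht, -⟩
    exact ht.le

theorem crossingTimes_succ_le {t : ℝ} (ht : crossingTimes f b p q a m < t) (htb : t ≤ b)
    (hpq : if m % 2 = 0 then p (f t) else q (f t)) :
    crossingTimes f b p q a (m + 1) ≤ t :=
  sInf_le ⟨t, rfl, ht, htb, hpq⟩

theorem exists_of_crossingTimes_succ_lt {x : EReal} (h : crossingTimes f b p q a (m + 1) < x) :
    ∃ t : ℝ, crossingTimes f b p q a m < t ∧ t ≤ b ∧
      (if m % 2 = 0 then p (f t) else q (f t)) ∧ (t : EReal) < x := by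
  obtain ⟨_, ⟨t, rfl, ht, htb, hpq⟩, htx⟩ := sInf_lt_iff.1 h
  exact ⟨t, ht, htb, hpq, htx⟩

theorem exists_isAltChain_of_crossingTimes_lt :
    ∀ {m : ℕ} {r : ℝ}, crossingTimes f b p q a m < r →
      ∃ w : Fin m → ℝ, IsAltChain f a b p q w ∧ ∀ i, w i < r
  | 0, _, _ => ⟨Fin.elim0, isAltChain_fin_zero _, fun i => i.elim0⟩
  | m + 1, r, h => by
    obtain ⟨t, ht, htb, hpq, htr⟩ := exists_of_crossingTimes_succ_lt h
    obtain ⟨w, hw, hwt⟩ := exists_isAltChain_of_crossingTimes_lt ht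
    have hat : a < t :=
      EReal.coe_lt_coe_iff.1 <| (crossingTimes_mono (Nat.zero_le m)).trans_lt ht
    refine ⟨_, hw.snoc hwt ⟨hat, htb⟩ hpq, Fin.lastCases ?_ fun i => ?_⟩
    · simpa using EReal.coe_lt_coe_iff.1 htr
    · simpa using (hwt i).trans (EReal.coe_lt_coe_iff.1 htr)

theorem crossingTimes_succ_le_last :
    ∀ {m : ℕ} {w : Fin (m + 1) → ℝ}, IsAltChain f a b p q w →
      crossingTimes f b p q a (m + 1) ≤ w (Fin.last m)
  | 0, _, hw => crossingTimes_succ_le (EReal.coe_lt_coe_iff.2 (hw.mem_Ioc 0).1)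
      (hw.mem_Ioc 0).2 (hw.alt 0)
  | _ + 1, _, hw => crossingTimes_succ_le
      ((crossingTimes_succ_le_last hw.init).trans_lt
        (EReal.coe_lt_coe_iff.2 (hw.strictMono (Fin.castSucc_lt_last _))))
      (hw.mem_Ioc _).2 (hw.alt (Fin.last _))

theorem crossingTimes_succ_le_iff :
    crossingTimes f b p q a (m + 1) ≤ b ↔ ∃ w : Fin (m + 1) → ℝ, IsAltChain f a b p q w := by
  constructor
  · intro h
    obtain ⟨t, ht, htb, hpq, -⟩ :=
      exists_of_crossingTimes_succ_lt (h.trans_lt (EReal.coe_lt_top b))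
    obtain ⟨w, hw, hwt⟩ := exists_isAltChain_of_crossingTimes_lt ht
    have hat : a < t :=
      EReal.coe_lt_coe_iff.1 <| (crossingTimes_mono (Nat.zero_le m)).trans_lt ht
    exact ⟨_, hw.snoc hwt ⟨hat, htb⟩ hpq⟩
  · rintro ⟨w, hw⟩
    exact (crossingTimes_succ_le_last hw).trans (EReal.coe_le_coe_iff.2 (hw.mem_Ioc _).2)

theorem crossingTimes_comp (φ : ℝ → ℝ) :
    crossingTimes (φ ∘ f) b p q a = crossingTimes f b (p ∘ φ) (q ∘ φ) a := by
  funext n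
  induction n with
  | zero => rfl
  | succ n ih =>
    show sInf _ = sInf _
    rw [ih]
    rfl

end CrossingTimes

section Upcrossings

variable {f : ℝ → ℝ} {a b c y : ℝ} {T T' : Set ℝ}

def upcrossLengths (f : ℝ → ℝ) (a b c y : ℝ) (T : Set ℝ) : Set ℕ :=
  {n | ∃ w : Fin (2 * n) → ℝ, IsAltChain f a b (· < y) (y + c < ·) w ∧ ∀ i, w i ∈ T}

theorem zero_mem_upcrossLengths : 0 ∈ upcrossLengths f a b c y T :=
  ⟨Fin.elim0, isAltChain_fin_zero _, fun i => i.elim0⟩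

theorem upcrossLengths_mono (hT : T ⊆ T') :
    upcrossLengths f a b c y T ⊆ upcrossLengths f a b c y T' :=
  fun _ ⟨w, hw, hwT⟩ => ⟨w, hw, fun i => hT (hwT i)⟩

theorem upcross_eq_iSup :
    upcross f a b c y = ⨆ n ∈ upcrossLengths f a b c y univ, (n : ℝ≥0∞) := by
  refine le_antisymm (iSup₂_le fun n hn => ?_) (iSup₂_le fun n hn => ?_)
  · cases n with
    | zero => simp
    | succ n =>
      obtain ⟨w, hw⟩ := (crossingTimes_succ_le_iff (m := 2 * n + 1)).1 hn
      exact le_iSup₂_of_le (n + 1) ⟨w, hw, fun _ => trivial⟩ le_rfl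
  · cases n with
    | zero => simp
    | succ n =>
      obtain ⟨w, hw, -⟩ := hn
      exact le_iSup₂_of_le (n + 1) ((crossingTimes_succ_le_iff (m := 2 * n + 1)).2 ⟨w, hw⟩) le_rfl

theorem toReal_upcross_eq_sSup (hbdd : BddAbove (upcrossLengths f a b c y univ)) :
    (upcross f a b c y).toReal = sSup (upcrossLengths f a b c y univ) := by
  suffices upcross f a b c y = (sSup (upcrossLengths f a b c y univ) : ℕ) by simp [this]
  rw [upcross_eq_iSup]
  exact le_antisymm (iSup₂_le fun n hn => Nat.cast_le.2 (le_csSup hbdd hn))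
    (le_iSup₂_of_le _ (Nat.sSup_mem ⟨0, zero_mem_upcrossLengths⟩ hbdd) le_rfl)

theorem IsAltChain.le_dist {m : ℕ} {w : Fin m → ℝ}
    (hw : IsAltChain f a b (· < y) (y + c < ·) w) {i j : Fin m} (hij : (i : ℕ) + 1 = j) :
    c ≤ dist (f (w i)) (f (w j)) := by
  have hi := hw.alt i
  have hj := hw.alt j
  rw [Real.dist_eq, le_abs]
  split_ifs at hi hj <;> first | omega | (left; linarith) | (right; linarith)

end Upcrossings

section Bound

variable {f : ℝ → ℝ} {a b ε : ℝ}

theorem length_le_card_of_cover {s : Set ℝ} {C : Finset (Set ℝ)} (hs : s ⊆ ⋃ I ∈ C, I)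
    (hC : ∀ I ∈ C, I.OrdConnected ∧ ∀ u ∈ I, ∀ v ∈ I, dist (f u) (f v) < ε)
    {m : ℕ} {w : Fin m → ℝ} (hw : StrictMono w) (hws : ∀ i, w i ∈ s)
    (hsep : ∀ i j : Fin m, (i : ℕ) + 1 = j → ε ≤ dist (f (w i)) (f (w j))) :
    m ≤ C.card := by
  choose I hIC hwI using fun i => mem_iUnion₂.1 (hs (hws i))
  -- if `w i` and `w j` lie in one piece, so does `w (i + 1)`, which is too far from `w i`
  have hlt : ∀ i j, i < j → I i ≠ I j := by
    intro i j hij hIij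
    let k : Fin m := ⟨i + 1, by omega⟩
    have hk : w k ∈ I i := (hC _ (hIC i)).1.out (hwI i) (hIij ▸ hwI j)
      ⟨(hw (Fin.lt_def.2 (by simp [k]))).le, hw.monotone (Fin.le_def.2 (by simp [k]; omega))⟩
    exact (hsep i k rfl).not_gt ((hC _ (hIC i)).2 _ (hwI i) _ hk)
  have hinj : Function.Injective I := fun i j h => by
    by_contra hne
    rcases lt_or_gt_of_ne hne with hij | hij
    exacts [hlt i j hij h, hlt j i hij h.symm]
  simpa using Finset.card_le_card_of_injOn (s := Finset.univ) I (fun i _ => hIC i) hinj.injOn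

theorem exists_Ioo_dist_lt_of_tendsto_nhdsGT {x L : ℝ} (h : Tendsto f (𝓝[>] x) (𝓝 L))
    (hε : 0 < ε) : ∃ r > x, ∀ u ∈ Ioo x r, ∀ v ∈ Ioo x r, dist (f u) (f v) < ε := by
  obtain ⟨t, ht, htε⟩ := (Metric.cauchy_iff.1 h.cauchy_map).2 ε hε
  obtain ⟨r, hr, hsub⟩ := mem_nhdsGT_iff_exists_Ioo_subset.1 ht
  exact ⟨r, hr, fun u hu v hv => htε _ (hsub hu) _ (hsub hv)⟩

theorem exists_Ioo_dist_lt_of_tendsto_nhdsLT {x L : ℝ} (h : Tendsto f (𝓝[<] x) (𝓝 L))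
    (hε : 0 < ε) : ∃ l < x, ∀ u ∈ Ioo l x, ∀ v ∈ Ioo l x, dist (f u) (f v) < ε := by
  obtain ⟨t, ht, htε⟩ := (Metric.cauchy_iff.1 h.cauchy_map).2 ε hε
  obtain ⟨l, hl, hsub⟩ := mem_nhdsLT_iff_exists_Ioo_subset.1 ht
  exact ⟨l, hl, fun u hu v hv => htε _ (hsub hu) _ (hsub hv)⟩

theorem Regulated.exists_oscillation_lt (hf : Regulated f a b) (hε : 0 < ε) {x : ℝ}
    (hx : x ∈ Icc a b) :
    ∃ l < x, ∃ r > x,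
      (∀ u ∈ Ioo l x ∩ Icc a b, ∀ v ∈ Ioo l x ∩ Icc a b, dist (f u) (f v) < ε) ∧
      (∀ u ∈ Ioo x r ∩ Icc a b, ∀ v ∈ Ioo x r ∩ Icc a b, dist (f u) (f v) < ε) := by
  obtain ⟨l, hl, hleft⟩ : ∃ l < x,
      ∀ u ∈ Ioo l x ∩ Icc a b, ∀ v ∈ Ioo l x ∩ Icc a b, dist (f u) (f v) < ε := by
    rcases hx.1.eq_or_lt with hax | hax
    · exact ⟨x - 1, by linarith, fun u hu => absurd (hax ▸ hu.2.1) (not_le.2 hu.1.2)⟩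
    · obtain ⟨L, hL⟩ := hf.2 x ⟨hax, hx.2⟩
      obtain ⟨l, hl, hosc⟩ := exists_Ioo_dist_lt_of_tendsto_nhdsLT hL hε
      exact ⟨l, hl, fun u hu v hv => hosc u hu.1 v hv.1⟩
  obtain ⟨r, hr, hright⟩ : ∃ r > x,
      ∀ u ∈ Ioo x r ∩ Icc a b, ∀ v ∈ Ioo x r ∩ Icc a b, dist (f u) (f v) < ε := by
    rcases hx.2.eq_or_lt with hxb | hxb
    · exact ⟨x + 1, by linarith, fun u hu => absurd (hxb ▸ hu.2.2) (not_le.2 hu.1.1)⟩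
    · obtain ⟨L, hL⟩ := hf.1 x ⟨hx.1, hxb⟩
      obtain ⟨r, hr, hosc⟩ := exists_Ioo_dist_lt_of_tendsto_nhdsGT hL hε
      exact ⟨r, hr, fun u hu v hv => hosc u hu.1 v hv.1⟩
  exact ⟨l, hl, r, hr, hleft, hright⟩

theorem Regulated.exists_bound (hf : Regulated f a b) (hε : 0 < ε) :
    ∃ N : ℕ, ∀ (m : ℕ) (w : Fin m → ℝ), StrictMono w → (∀ i, w i ∈ Icc a b) →
      (∀ i j : Fin m, (i : ℕ) + 1 = j → ε ≤ dist (f (w i)) (f (w j))) → m ≤ N := by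
  classical
  choose! l hl r hr hleft hright using
    fun x (hx : x ∈ Icc a b) => hf.exists_oscillation_lt hε hx
  obtain ⟨F, hFab, hcover⟩ := isCompact_Icc.elim_nhds_subcover (fun x => Ioo (l x) (r x))
    fun x hx => Ioo_mem_nhds (hl x hx) (hr x hx)
  let C : Finset (Set ℝ) :=
    F.biUnion fun x => {Ioo (l x) x ∩ Icc a b, {x}, Ioo x (r x) ∩ Icc a b}
  refine ⟨C.card, fun m w hw hwab hsep => length_le_card_of_cover ?_ ?_ hw hwab hsep⟩
  · intro u hu
    obtain ⟨x, hxF, hux⟩ := mem_iUnion₂.1 (hcover hu)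
    have hC : ∀ I ∈ ({Ioo (l x) x ∩ Icc a b, {x}, Ioo x (r x) ∩ Icc a b} : Finset (Set ℝ)),
        I ∈ C := fun I hI => Finset.mem_biUnion.2 ⟨x, hxF, hI⟩
    rcases lt_trichotomy u x with hux' | hux' | hux'
    · exact mem_iUnion₂.2 ⟨Ioo (l x) x ∩ Icc a b, hC _ (by simp), ⟨hux.1, hux'⟩, hu⟩
    · exact mem_iUnion₂.2 ⟨{x}, hC _ (by simp), hux'⟩
    · exact mem_iUnion₂.2 ⟨Ioo x (r x) ∩ Icc a b, hC _ (by simp), ⟨hux', hux.2⟩, hu⟩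
  · intro I hI
    obtain ⟨x, hxF, hI⟩ := Finset.mem_biUnion.1 hI
    simp only [Finset.mem_insert, Finset.mem_singleton] at hI
    obtain rfl | rfl | rfl := hI
    · exact ⟨inferInstance, hleft x (hFab x hxF)⟩
    · exact ⟨ordConnected_singleton, by simp [hε]⟩
    · exact ⟨inferInstance, hright x (hFab x hxF)⟩

end Bound

theorem Regulated.neg {f : ℝ → ℝ} {a b : ℝ} (hf : Regulated f a b) : Regulated (-f) a b :=
  ⟨fun t ht => let ⟨L, hL⟩ := hf.1 t ht; ⟨-L, hL.neg⟩,
    fun t ht => let ⟨L, hL⟩ := hf.2 t ht; ⟨-L, hL.neg⟩⟩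

section SampleSet

variable {f : ℝ → ℝ} {a b : ℝ}

def rightIsolated (s : Set ℝ) : Set ℝ := {x ∈ s | 𝓝[s ∩ Ioi x] x = ⊥}

def sampleSet (f : ℝ → ℝ) (b : ℝ) : Set ℝ :=
  insert b (range ((↑) : ℚ → ℝ) ∪
    ⋃ q : ℚ, (rightIsolated {v | f v < q} ∪ rightIsolated {v | -f v < q}))

theorem countable_sampleSet : (sampleSet f b).Countable :=
  ((countable_range _).union (countable_iUnion fun _ =>
    countable_setOfPred_isolated_right_within.union
      countable_setOfPred_isolated_right_within)).insert b

theorem eventually_lt_or_mem_rightIsolated {u y L : ℝ} (hL : Tendsto f (𝓝[>] u) (𝓝 L))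
    (hfu : f u < y) :
    (∀ᶠ v in 𝓝[>] u, f v < y) ∨ ∃ q : ℚ, u ∈ rightIsolated {v | f v < q} := by
  by_cases hLy : L < y
  · exact Or.inl (hL.eventually_lt_const hLy)
  · obtain ⟨q, hfq, hqy⟩ := exists_rat_btwn hfu
    have hq : ∀ᶠ v in 𝓝[>] u, (q : ℝ) < f v :=
      hL.eventually_const_lt (hqy.trans_le (not_lt.1 hLy))
    refine Or.inr ⟨q, hfq, ?_⟩
    rw [← empty_mem_iff_bot, inter_comm, nhdsWithin_inter']
    exact mem_inf_of_inter hq (mem_principal_self _) fun v hv =>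
      lt_asymm hv.1 (show f v < q from hv.2)

theorem Regulated.exists_near_mem_of_lt (hf : Regulated f a b) {S : Set ℝ} (hbS : b ∈ S)
    (hℚS : range ((↑) : ℚ → ℝ) ⊆ S) (hisoS : ∀ q : ℚ, rightIsolated {v | f v < q} ⊆ S)
    {u y ε : ℝ} (hu : u ∈ Ioc a b) (hfu : f u < y) (hε : 0 < ε) :
    ∃ v ∈ S ∩ Ioc a b, |v - u| < ε ∧ f v < y := by
  rcases hu.2.eq_or_lt with hub | hub
  · exact ⟨u, ⟨hub ▸ hbS, hu⟩, by simpa using hε, hfu⟩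
  obtain ⟨L, hL⟩ := hf.1 u ⟨hu.1.le, hub⟩
  rcases eventually_lt_or_mem_rightIsolated hL hfu with hev | ⟨q, hq⟩
  · have hnear : ∀ᶠ v in 𝓝[>] u, v ∈ Ioc a b ∧ |v - u| < ε ∧ f v < y := by
      filter_upwards [hev, Ioo_mem_nhdsGT hub, Ioo_mem_nhdsGT (lt_add_of_pos_right u hε)]
        with v hfv hvb hvε
      exact ⟨⟨hu.1.trans hvb.1, hvb.2.le⟩,
        abs_lt.2 ⟨by linarith [hvε.1], by linarith [hvε.2]⟩, hfv⟩
    obtain ⟨r, hur, hsub⟩ := mem_nhdsGT_iff_exists_Ioo_subset.1 hnear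
    obtain ⟨q, hq⟩ := exists_rat_btwn (mem_Ioi.1 hur)
    exact ⟨q, ⟨hℚS ⟨q, rfl⟩, (hsub hq).1⟩, (hsub hq).2⟩
  · exact ⟨u, ⟨hisoS q hq, hu⟩, by simpa using hε, hfu⟩

theorem StrictMono.exists_pos_forall_two_mul_lt_sub {m : ℕ} {w : Fin m → ℝ}
    (hw : StrictMono w) : ∃ ε > 0, ∀ i j, i < j → 2 * ε < w j - w i := by
  have hmul : Tendsto (fun ε : ℝ => 2 * ε) (𝓝[>] 0) (𝓝 0) := by
    simpa using ((continuous_const_mul (2 : ℝ)).tendsto 0).mono_left nhdsWithin_le_nhds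
  have hev : ∀ i j, ∀ᶠ ε in 𝓝[>] (0 : ℝ), i < j → 2 * ε < w j - w i := by
    intro i j
    by_cases hij : i < j
    · exact (hmul.eventually_lt_const (sub_pos.2 (hw hij))).mono fun _ h _ => h
    · exact Eventually.of_forall fun _ h => absurd h hij
  obtain ⟨ε, hgap, hε⟩ :=
    ((eventually_all.2 fun i => eventually_all.2 (hev i)).and self_mem_nhdsWithin).exists
  exact ⟨ε, hε, hgap⟩

theorem Regulated.exists_isAltChain_mem_sampleSet (hf : Regulated f a b) {y z : ℝ} {m : ℕ}
    {w : Fin m → ℝ} (hw : IsAltChain f a b (· < y) (z < ·) w) :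
    ∃ w' : Fin m → ℝ, IsAltChain f a b (· < y) (z < ·) w' ∧ ∀ i, w' i ∈ sampleSet f b := by
  obtain ⟨ε, hε, hgap⟩ := hw.strictMono.exists_pos_forall_two_mul_lt_sub
  have hbS : b ∈ sampleSet f b := mem_insert b _
  have hℚS : range ((↑) : ℚ → ℝ) ⊆ sampleSet f b := fun x hx => Or.inr (Or.inl hx)
  have hnear : ∀ i, ∃ v ∈ sampleSet f b ∩ Ioc a b, |v - w i| < ε ∧
      if (i : ℕ) % 2 = 0 then f v < y else z < f v := by
    intro i
    have hi := hw.alt i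
    split_ifs at hi ⊢
    · exact hf.exists_near_mem_of_lt hbS hℚS
        (fun q x hx => Or.inr (Or.inr (mem_iUnion.2 ⟨q, Or.inl hx⟩))) (hw.mem_Ioc i) hi hε
    · obtain ⟨v, hv, hvw, hfv⟩ := hf.neg.exists_near_mem_of_lt hbS hℚS
        (fun q x hx => Or.inr (Or.inr (mem_iUnion.2 ⟨q, Or.inr hx⟩))) (hw.mem_Ioc i)
        (neg_lt_neg hi) hε
      exact ⟨v, hv, hvw, neg_lt_neg_iff.1 hfv⟩
  choose w' hw'S hw'w hw'alt using hnear
  refine ⟨w', ⟨fun i j hij => ?_, fun i => (hw'S i).2, hw'alt⟩, fun i => (hw'S i).1⟩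
  have hi := abs_lt.1 (hw'w i)
  have hj := abs_lt.1 (hw'w j)
  linarith [hgap i j hij]

end SampleSet

section StepFunctions

theorem IsStepFunction.measurable {g : ℝ → ℝ} (hg : IsStepFunction g) : Measurable g := by
  obtain ⟨s, hs⟩ := hg
  refine measurable_of_measurable_on_compl_finite (s : Set ℝ) s.finite_toSet ?_
  refine (continuousOn_iff_continuous_domRestrict.1 fun x hx => ?_).measurable
  obtain ⟨l, r, hxlr, hlr⟩ :=
    mem_nhds_iff_exists_Ioo_subset.1 (s.finite_toSet.isClosed.isOpen_compl.mem_nhds hx)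
  have hconst : ∀ᶠ v in 𝓝 x, g x = g v := by
    filter_upwards [Ioo_mem_nhds hxlr.1 hxlr.2] with v hv
    rcases le_total v x with hvx | hxv
    · exact (hs v x hvx fun z hz => hlr ⟨hv.1.trans_le hz.1, hz.2.trans_lt hxlr.2⟩).symm
    · exact hs x v hxv fun z hz => hlr ⟨hxlr.1.trans_le hz.1, hz.2.trans_lt hv.2⟩
  exact (continuousAt_const.congr hconst).continuousWithinAt

theorem IsStepFunction.comp_neg_sub {g : ℝ → ℝ} (hg : IsStepFunction g) (c : ℝ) :
    IsStepFunction fun y => g (-y - c) := by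
  obtain ⟨s, hs⟩ := hg
  refine ⟨s.image fun x => -x - c, fun x y hxy hxys =>
    (hs _ _ (by linarith) fun z hz hzs => ?_).symm⟩
  exact hxys (-z - c) ⟨by linarith [hz.2], by linarith [hz.1]⟩ (Finset.mem_image_of_mem _ hzs)

theorem isStepFunction_sSup_upcrossLengths (f : ℝ → ℝ) (a b c : ℝ) (T : Finset ℝ) :
    IsStepFunction fun y => ((sSup (upcrossLengths f a b c y T) : ℕ) : ℝ) := by
  classical
  refine ⟨T.image f ∪ T.image (f · - c), fun x y hxy hxyT => ?_⟩
  have hlow : ∀ t ∈ T, f t < y → f t < x := fun t ht hty => not_le.1 fun hxt =>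
    hxyT (f t) ⟨hxt, hty.le⟩ (Finset.mem_union_left _ (Finset.mem_image_of_mem _ ht))
  have hhigh : ∀ t ∈ T, x + c < f t → y + c < f t := fun t ht hxt => not_le.1 fun hty =>
    hxyT (f t - c) ⟨by linarith, by linarith⟩
      (Finset.mem_union_right _ (Finset.mem_image_of_mem (f · - c) ht))
  suffices upcrossLengths f a b c x T = upcrossLengths f a b c y T by simp only [this]
  ext n
  constructor
  · rintro ⟨w, hw, hwT⟩
    exact ⟨w, hw.imp (fun _ h => h.trans_le hxy) fun i => hhigh _ (hwT i), hwT⟩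
  · rintro ⟨w, hw, hwT⟩
    exact ⟨w, hw.imp (fun i => hlow _ (hwT i)) fun _ h => by linarith, hwT⟩

end StepFunctions

section Approximation

variable {f : ℝ → ℝ} {a b c : ℝ}

theorem Regulated.bddAbove_upcrossLengths (hf : Regulated f a b) (hc : 0 < c) (y : ℝ) :
    BddAbove (upcrossLengths f a b c y univ) := by
  obtain ⟨N, hN⟩ := hf.exists_bound hc
  refine ⟨N, fun n ⟨w, hw, _⟩ => ?_⟩
  have := hN _ w hw.strictMono (fun i => Ioc_subset_Icc_self (hw.mem_Ioc i))
    fun _ _ => hw.le_dist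
  omega

theorem Regulated.exists_isStepFunction_tendsto_upcross (hf : Regulated f a b) (hc : 0 < c) :
    ∃ g : ℕ → ℝ → ℝ, (∀ n, IsStepFunction (g n)) ∧
      ∀ y, Tendsto (fun n => g n y) atTop (𝓝 (upcross f a b c y).toReal) := by
  obtain ⟨e, he⟩ := countable_iff_exists_subset_range.1 (countable_sampleSet (f := f) (b := b))
  refine ⟨fun n y => (sSup (upcrossLengths f a b c y ((Finset.range n).image e)) : ℕ),
    fun n => isStepFunction_sSup_upcrossLengths f a b c _, fun y => ?_⟩
  have hbdd := hf.bddAbove_upcrossLengths hc y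
  rw [toReal_upcross_eq_sSup hbdd]
  refine tendsto_const_nhds.congr' ?_
  obtain ⟨w, hw, -⟩ := Nat.sSup_mem ⟨0, zero_mem_upcrossLengths⟩ hbdd
  obtain ⟨w', hw', hw'S⟩ := hf.exists_isAltChain_mem_sampleSet hw
  choose k hk using fun i => he (hw'S i)
  filter_upwards [eventually_gt_atTop (Finset.univ.sup k)] with n hn
  have hmem : sSup (upcrossLengths f a b c y univ) ∈
      upcrossLengths f a b c y ((Finset.range n).image e) :=
    ⟨w', hw', fun i => Finset.mem_image.2
      ⟨k i, Finset.mem_range.2 ((Finset.le_sup (Finset.mem_univ i)).trans_lt hn), hk i⟩⟩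
  have hsub := upcrossLengths_mono (f := f) (a := a) (b := b) (c := c) (y := y)
    (subset_univ ((Finset.range n).image e : Set ℝ))
  exact congrArg _ (le_antisymm (le_csSup (hbdd.mono hsub) hmem)
    (csSup_le_csSup hbdd ⟨0, zero_mem_upcrossLengths⟩ hsub))

end Approximation

theorem downcross_eq_upcross_neg (f : ℝ → ℝ) (a b c y : ℝ) :
    downcross f a b c y = upcross (-f) a b c (-y - c) := by
  have hp : (· < -y - c) ∘ Neg.neg = (y + c < ·) := by
    ext r
    simp only [Function.comp_apply]
    constructor <;> intro <;> linarith
  have hq : (-y - c + c < ·) ∘ Neg.neg = (· < y) := by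
    ext r
    simp only [Function.comp_apply]
    constructor <;> intro <;> linarith
  rw [upcross, downcross, show -f = Neg.neg ∘ f from rfl, crossingTimes_comp, hp, hq]

theorem crossings_pointwise_limit_of_step_functions_general (a b c : ℝ) (f : ℝ → ℝ)
    (hf : Regulated f a b) (hc : 0 < c) :
    (∃ g : ℕ → ℝ → ℝ, (∀ n, IsStepFunction (g n)) ∧
      ∀ y : ℝ, Filter.Tendsto (fun n => g n y) Filter.atTop
        (nhds ((upcross f a b c y).toReal))) ∧
    (∃ g : ℕ → ℝ → ℝ, (∀ n, IsStepFunction (g n)) ∧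
      ∀ y : ℝ, Filter.Tendsto (fun n => g n y) Filter.atTop
        (nhds ((downcross f a b c y).toReal))) ∧
    Measurable (fun y : ℝ => (upcross f a b c y).toReal) ∧
    Measurable (fun y : ℝ => (downcross f a b c y).toReal) := by
  obtain ⟨g, hg, hlim⟩ := hf.exists_isStepFunction_tendsto_upcross hc
  obtain ⟨g', hg', hlim'⟩ := hf.neg.exists_isStepFunction_tendsto_upcross hc
  have hg_down : ∀ n, IsStepFunction fun y => g' n (-y - c) := fun n => (hg' n).comp_neg_sub c
  have hlim_down : ∀ y,
      Tendsto (fun n => g' n (-y - c)) atTop (𝓝 (downcross f a b c y).toReal) :=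
    fun y => downcross_eq_upcross_neg f a b c y ▸ hlim' (-y - c)
  refine ⟨⟨g, hg, hlim⟩, ⟨_, hg_down, hlim_down⟩, ?_, ?_⟩
  · exact measurable_of_tendsto_metrizable (fun n => (hg n).measurable) (tendsto_pi_nhds.2 hlim)
  · exact measurable_of_tendsto_metrizable (fun n => (hg_down n).measurable)
      (tendsto_pi_nhds.2 hlim_down)

/-- For a regulated `f : [a,b] → ℝ` and `c > 0`, the maps `y ↦ u_c^y(f,[a,b])` and
`y ↦ d_c^y(f,[a,b])` (as real-valued functions on `ℝ`) are pointwise limits of step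
functions; in particular they are Borel measurable. -/
theorem crossings_pointwise_limit_of_step_functions (a b c : ℝ) (f : ℝ → ℝ) (hab : a < b)
    (hf : Regulated f a b) (hc : 0 < c) :
    (∃ g : ℕ → ℝ → ℝ, (∀ n, IsStepFunction (g n)) ∧
      ∀ y : ℝ, Filter.Tendsto (fun n => g n y) Filter.atTop
        (nhds ((upcross f a b c y).toReal))) ∧
    (∃ g : ℕ → ℝ → ℝ, (∀ n, IsStepFunction (g n)) ∧
      ∀ y : ℝ, Filter.Tendsto (fun n => g n y) Filter.atTop
        (nhds ((downcross f a b c y).toReal))) ∧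
    Measurable (fun y : ℝ => (upcross f a b c y).toReal) ∧
    Measurable (fun y : ℝ => (downcross f a b c y).toReal) :=
  crossings_pointwise_limit_of_step_functions_general a b c f hf hc
end

section
/- Let f, g : [a,b] → ℝ, let c > 0 and let ε ∈ (0, c/2) satisfy sup_{t ∈ [a,b]} |f(t) − g(t)| ≤ ε. Then for every y ∈ ℝ, u_c^y(f,[a,b]) ≤ u_{c−2ε}^{y+ε}(g,[a,b]). -/
open MeasureTheory Filter Set
open scoped ENNReal NNReal

/-! Uniform closeness moves every level by at most `ε`: whenever `f t < y` we have
`g t < y + ε`, and whenever `f t > y + c` we have `g t > y + ε + (c - 2ε)`. Hence each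
hitting time of `g` for the shrunken segment is an infimum over a larger set than the
corresponding hitting time of `f`, so by induction the crossing times of `g` are never later
than those of `f`, and `g` completes at least as many upcrossings. -/

lemma le_crossingTimes (f : ℝ → ℝ) (b : ℝ) (p q : ℝ → Prop) (a : ℝ) (n : ℕ) :
    (a : EReal) ≤ crossingTimes f b p q a n := by
  induction n with
  | zero => exact le_rfl
  | succ n ih =>
    refine le_sInf ?_
    rintro _ ⟨t, rfl, ht, -, -⟩
    exact (ih.trans_lt ht).le

lemma crossingTimes_le_crossingTimes {f g : ℝ → ℝ} {a b : ℝ} {p q p' q' : ℝ → Prop}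
    (hp : ∀ t ∈ Ioc a b, p (f t) → p' (g t)) (hq : ∀ t ∈ Ioc a b, q (f t) → q' (g t))
    (n : ℕ) : crossingTimes g b p' q' a n ≤ crossingTimes f b p q a n := by
  induction n with
  | zero => exact le_rfl
  | succ n ih =>
    refine sInf_le_sInf ?_
    rintro _ ⟨t, rfl, hlt, htb, hft⟩
    have hat : a < t := by exact_mod_cast (le_crossingTimes f b p q a n).trans_lt hlt
    refine ⟨t, rfl, ih.trans_lt hlt, htb, ?_⟩
    split_ifs at hft ⊢
    · exact hp t ⟨hat, htb⟩ hft
    · exact hq t ⟨hat, htb⟩ hft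

lemma upcross_le_upcross {f g : ℝ → ℝ} {a b c y c' y' : ℝ}
    (h : ∀ n, crossingTimes g b (· < y') (y' + c' < ·) a n ≤
      crossingTimes f b (· < y) (y + c < ·) a n) :
    upcross f a b c y ≤ upcross g a b c' y' :=
  iSup₂_le fun n hn => le_iSup₂_of_le n ((h (2 * n)).trans hn) le_rfl

theorem upcross_le_of_uniform_approx_general (a b c ε y : ℝ) (f g : ℝ → ℝ)
    (happrox : ∀ t ∈ Set.Icc a b, |f t - g t| ≤ ε) :
    upcross f a b c y ≤ upcross g a b (c - 2 * ε) (y + ε) := by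
  have hclose : ∀ t ∈ Ioc a b, f t - ε ≤ g t ∧ g t ≤ f t + ε := fun t ht => by
    have := abs_sub_le_iff.mp (happrox t (Ioc_subset_Icc_self ht))
    constructor <;> linarith
  refine upcross_le_upcross (crossingTimes_le_crossingTimes ?_ ?_)
  · intro t ht hft
    linarith [(hclose t ht).2]
  · intro t ht hft
    linarith [(hclose t ht).1]

/-- If `g` approximates `f` uniformly on `[a,b]` with accuracy `ε ∈ (0, c/2)`, then every
upcrossing by `f` of `[y, y+c]` yields an upcrossing by `g` of `[y+ε, y+ε+(c-2ε)]`: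
`u_c^y(f,[a,b]) ≤ u_{c-2ε}^{y+ε}(g,[a,b])`. -/
theorem upcross_le_of_uniform_approx (a b c ε y : ℝ) (f g : ℝ → ℝ) (hab : a < b)
    (hc : 0 < c) (hε : 0 < ε) (hεc : ε < c / 2)
    (happrox : ∀ t ∈ Set.Icc a b, |f t - g t| ≤ ε) :
    upcross f a b c y ≤ upcross g a b (c - 2 * ε) (y + ε) :=
  upcross_le_of_uniform_approx_general a b c ε y f g happrox
end

section
/- A function f : [a,b] → ℝ is regulated if and only if its truncated variation is finite at every positive truncation level: f is regulated ⇔ TTV^c(f,[a,b]) < +∞ for every c > 0. -/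
open MeasureTheory Filter Set
open scoped ENNReal NNReal

/-!
If `f` is regulated, continuous induction along `[a, b]` gives a bound `K` for `|f|` and a
finite set `F` such that `|f v - f u| ≤ c` whenever `[u, v]` misses `F`. In a partition, only the
increments over intervals meeting `F` survive truncation at level `c`, and there are at most
`2 #F` of them, so `TTV^c ≤ 2 #F (2K - c)`.

Conversely, if `f` has no right limit at `t`, the Cauchy criterion fails for `f` on `(t, t + δ)`:
this gives a decreasing sequence in `(t, b]` whose consecutive values of `f` differ by at least
some `ε`, and partitions by its first `n` terms give `TTV^(ε/2) ≥ n ε / 2`. Left limits are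
handled symmetrically.
-/

open scoped Topology Finset

theorem card_filter_exists_mem_Icc_le {α : Type*} [LinearOrder α] {n : ℕ}
    {t : Fin (n + 1) → α} (ht : StrictMono t) (F : Finset α) :
    #{i : Fin n | ∃ p ∈ F, p ∈ Icc (t i.castSucc) (t i.succ)} ≤ 2 * #F := by
  classical
  -- A point of `F` lies in at most one `Ioc (t i) (t (i + 1))` and is at most one left endpoint.
  set A : Finset (Fin n) := {i | ∃ p ∈ F, p ∈ Ioc (t i.castSucc) (t i.succ)}
  set B : Finset (Fin n) := {i | t i.castSucc ∈ F}
  have hA : #A ≤ #F := by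
    refine Finset.card_le_card_of_forall_subsingleton
      (fun i p => p ∈ Ioc (t i.castSucc) (t i.succ)) (fun i hi => by simpa [A] using hi)
      fun p _ i hi j hj => ?_
    have disjoint : ∀ i j : Fin n, i < j → p ∈ Ioc (t i.castSucc) (t i.succ) →
        p ∉ Ioc (t j.castSucc) (t j.succ) := fun i j hij hi hj =>
      (hi.2.trans (ht.monotone (Fin.succ_le_castSucc_iff.2 hij))).not_gt hj.1
    by_contra hij
    rcases lt_or_gt_of_ne hij with hlt | hlt
    · exact disjoint i j hlt hi.2 hj.2
    · exact disjoint j i hlt hj.2 hi.2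
  have hB : #B ≤ #F :=
    Finset.card_le_card_of_injOn (fun i => t i.castSucc) (fun i hi => by simpa [B] using hi)
      fun i _ j _ hij => Fin.castSucc_injective _ (ht.injective hij)
  calc #{i : Fin n | ∃ p ∈ F, p ∈ Icc (t i.castSucc) (t i.succ)}
      ≤ #(A ∪ B) := by
        refine Finset.card_le_card fun i hi => ?_
        obtain ⟨p, hpF, hp⟩ := (Finset.mem_filter.1 hi).2
        rcases hp.1.eq_or_lt with heq | hlt
        · exact Finset.mem_union_right _ (by simpa [B, heq] using hpF)
        · exact Finset.mem_union_left _ (by simpa [A] using ⟨p, hpF, hlt, hp.2⟩)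
    _ ≤ #A + #B := Finset.card_union_le A B
    _ ≤ 2 * #F := by omega

theorem Antitone.continuous_induction {α : Type*} [ConditionallyCompleteLinearOrder α]
    [NoMinOrder α] {P : α → Prop} {a b : α} (hP : Antitone P) (hlt : ∀ y < a, P y)
    (hstep : ∀ x ∈ Icc a b, (∀ y < x, P y) → ∃ z > x, P z) : P b := by
  by_contra hb
  rcases lt_or_ge b a with hba | hab
  · exact hb (hlt b hba)
  have hbound : ∀ z, P z → z ≤ b := fun z hz => le_of_not_gt fun hbz => hb (hP hbz.le hz)
  obtain ⟨y₀, hy₀⟩ := exists_lt a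
  have hne : {x | P x}.Nonempty := ⟨y₀, hlt y₀ hy₀⟩
  set s := sSup {x | P x}
  have hbelow : ∀ y < max s a, P y := by
    intro y hy
    rcases lt_max_iff.1 hy with hys | hya
    · obtain ⟨z, hz, hyz⟩ := exists_lt_of_lt_csSup hne hys
      exact hP hyz.le hz
    · exact hlt y hya
  obtain ⟨z, hz, hPz⟩ :=
    hstep (max s a) ⟨le_max_right _ _, max_le (csSup_le hne hbound) hab⟩ hbelow
  exact (le_csSup ⟨b, hbound⟩ hPz).not_gt ((le_max_left _ _).trans_lt hz)

section TruncatedVariation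

variable {f : ℝ → ℝ} {a b c : ℝ}

theorem sum_le_ttv {n : ℕ} {t : Fin (n + 1) → ℝ} (ht : StrictMono t)
    (hmem : ∀ i, t i ∈ Icc a b) :
    ∑ i : Fin n, ENNReal.ofReal (|f (t i.succ) - f (t i.castSucc)| - c) ≤ TTV f a b c :=
  le_iSup_of_le n <| le_iSup_of_le t <| le_iSup_of_le ht <| le_iSup_of_le hmem le_rfl

theorem ttv_le_of_forall_abs_sub_le {K : ℝ} (hK : ∀ u ∈ Icc a b, |f u| ≤ K) (F : Finset ℝ)
    (hF : ∀ u ∈ Icc a b, ∀ v ∈ Icc a b, u ≤ v → (∀ p ∈ F, p ∉ Icc u v) → |f v - f u| ≤ c) :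
    TTV f a b c ≤ (2 * #F : ℕ) * ENNReal.ofReal (2 * K - c) := by
  classical
  refine iSup_le fun n => iSup_le fun t => iSup_le fun ht => iSup_le fun hmem => ?_
  set bad : Finset (Fin n) := {i | ∃ p ∈ F, p ∈ Icc (t i.castSucc) (t i.succ)}
  calc ∑ i : Fin n, ENNReal.ofReal (|f (t i.succ) - f (t i.castSucc)| - c)
      ≤ ∑ i ∈ bad, ENNReal.ofReal (2 * K - c) := by
        rw [Finset.sum_filter]
        refine Finset.sum_le_sum fun i _ => ?_
        split_ifs with hi
        · refine ENNReal.ofReal_le_ofReal ?_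
          linarith [hK _ (hmem i.succ), hK _ (hmem i.castSucc),
            abs_sub (f (t i.succ)) (f (t i.castSucc))]
        · push Not at hi
          refine (ENNReal.ofReal_eq_zero.2 ?_).le
          have := hF _ (hmem i.castSucc) _ (hmem i.succ) (ht i.castSucc_lt_succ).le hi
          linarith
    _ = #bad * ENNReal.ofReal (2 * K - c) := by rw [Finset.sum_const, nsmul_eq_mul]
    _ ≤ (2 * #F : ℕ) * ENNReal.ofReal (2 * K - c) := by
        gcongr
        exact card_filter_exists_mem_Icc_le ht F

theorem ttv_eq_top_of_forall_exists_jumps {ε : ℝ} (hc : c < ε)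
    (h : ∀ n : ℕ, ∃ t : Fin (n + 1) → ℝ, StrictMono t ∧ (∀ i, t i ∈ Icc a b) ∧
      ∀ i : Fin n, ε ≤ |f (t i.succ) - f (t i.castSucc)|) :
    TTV f a b c = ⊤ := by
  by_contra hne
  obtain ⟨n, hn⟩ := ENNReal.exists_nat_mul_gt (ENNReal.ofReal_pos.2 (sub_pos.2 hc)).ne' hne
  obtain ⟨t, ht, hmem, hjump⟩ := h n
  refine hn.not_ge ?_
  calc (n : ℝ≥0∞) * ENNReal.ofReal (ε - c)
      = ∑ _i : Fin n, ENNReal.ofReal (ε - c) := by simp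
    _ ≤ ∑ i : Fin n, ENNReal.ofReal (|f (t i.succ) - f (t i.castSucc)| - c) :=
        Finset.sum_le_sum fun i _ => ENNReal.ofReal_le_ofReal (by linarith [hjump i])
    _ ≤ TTV f a b c := sum_le_ttv ht hmem

theorem ttv_eq_top_of_strictMono {ε : ℝ} (hc : c < ε) {x : ℕ → ℝ} (hx : StrictMono x)
    (hmem : ∀ k, x k ∈ Icc a b) (hjump : ∀ k, ε ≤ |f (x (k + 1)) - f (x k)|) :
    TTV f a b c = ⊤ :=
  ttv_eq_top_of_forall_exists_jumps hc fun _ =>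
    ⟨fun i => x i, hx.comp Fin.val_strictMono, fun i => hmem i, fun i => hjump i⟩

theorem ttv_eq_top_of_strictAnti {ε : ℝ} (hc : c < ε) {x : ℕ → ℝ} (hx : StrictAnti x)
    (hmem : ∀ k, x k ∈ Icc a b) (hjump : ∀ k, ε ≤ |f (x (k + 1)) - f (x k)|) :
    TTV f a b c = ⊤ := by
  refine ttv_eq_top_of_forall_exists_jumps hc fun n =>
    ⟨fun i => x (n - i), fun i j hij => hx (by omega), fun i => hmem _, fun i => ?_⟩
  have : n - i.castSucc = n - i.succ + 1 := by simp only [Fin.val_castSucc, Fin.val_succ]; omega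
  simpa only [this, abs_sub_comm] using hjump (n - i.succ)

end TruncatedVariation

theorem exists_le_dist_of_not_cauchy {α β : Type*} [PseudoMetricSpace β] {l : Filter α}
    [l.NeBot] {f : α → β} (h : ¬Cauchy (map f l)) :
    ∃ ε > 0, ∀ s ∈ l, ∀ z, ∃ u ∈ s, ε ≤ dist (f u) (f z) := by
  rw [Metric.cauchy_iff] at h
  push Not at h
  obtain ⟨ε, hε, hfar⟩ := h map_neBot
  refine ⟨ε / 2, half_pos hε, fun s hs z => ?_⟩
  obtain ⟨_, ⟨u, hu, rfl⟩, _, ⟨v, hv, rfl⟩, huv⟩ := hfar _ (image_mem_map hs)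
  by_contra! hclose
  linarith [hclose u hu, hclose v hv, dist_triangle_right (f u) (f v) (f z)]

section OneSidedLimits

variable {f : ℝ → ℝ} {a b t : ℝ}

theorem exists_tendsto_nhdsGT_of_ttv_lt_top (h : ∀ c > 0, TTV f a b c < ⊤)
    (ht : t ∈ Ico a b) :
    ∃ L, Tendsto f (𝓝[>] t) (𝓝 L) := by
  rw [← cauchy_map_iff_exists_tendsto]
  by_contra hC
  obtain ⟨ε, hε, hfar⟩ := exists_le_dist_of_not_cauchy hC
  have hnext : ∀ d ∈ Ioi t, ∃ u ∈ Ioo t d, ε ≤ |f u - f d| :=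
    fun d hd => hfar _ (Ioo_mem_nhdsGT hd) d
  choose! g hg hgε using hnext
  set x : ℕ → ℝ := fun k => g^[k] b
  have hsucc : ∀ k, x (k + 1) = g (x k) := fun k => Function.iterate_succ_apply' g k b
  have hx : ∀ k, x k ∈ Ioc t b := by
    intro k
    induction k with
    | zero => exact ⟨ht.2, le_rfl⟩
    | succ k ih => rw [hsucc]; exact ⟨(hg _ ih.1).1, (hg _ ih.1).2.le.trans ih.2⟩
  have hanti : StrictAnti x :=
    strictAnti_nat_of_succ_lt fun k => by rw [hsucc]; exact (hg _ (hx k).1).2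
  refine (h (ε / 2) (half_pos hε)).ne (ttv_eq_top_of_strictAnti (half_lt_self hε) hanti
    (fun k => ⟨ht.1.trans (hx k).1.le, (hx k).2⟩) fun k => ?_)
  rw [hsucc]
  exact hgε _ (hx k).1

theorem exists_tendsto_nhdsLT_of_ttv_lt_top (h : ∀ c > 0, TTV f a b c < ⊤)
    (ht : t ∈ Ioc a b) :
    ∃ L, Tendsto f (𝓝[<] t) (𝓝 L) := by
  rw [← cauchy_map_iff_exists_tendsto]
  by_contra hC
  obtain ⟨ε, hε, hfar⟩ := exists_le_dist_of_not_cauchy hC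
  have hnext : ∀ d ∈ Iio t, ∃ u ∈ Ioo d t, ε ≤ |f u - f d| :=
    fun d hd => hfar _ (Ioo_mem_nhdsLT hd) d
  choose! g hg hgε using hnext
  set x : ℕ → ℝ := fun k => g^[k] a
  have hsucc : ∀ k, x (k + 1) = g (x k) := fun k => Function.iterate_succ_apply' g k a
  have hx : ∀ k, x k ∈ Ico a t := by
    intro k
    induction k with
    | zero => exact ⟨le_rfl, ht.1⟩
    | succ k ih => rw [hsucc]; exact ⟨ih.1.trans (hg _ ih.2).1.le, (hg _ ih.2).2⟩
  have hmono : StrictMono x :=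
    strictMono_nat_of_lt_succ fun k => by rw [hsucc]; exact (hg _ (hx k).2).1
  refine (h (ε / 2) (half_pos hε)).ne (ttv_eq_top_of_strictMono (half_lt_self hε) hmono
    (fun k => ⟨(hx k).1, (hx k).2.le.trans ht.2⟩) fun k => ?_)
  rw [hsucc]
  exact hgε _ (hx k).2

end OneSidedLimits

namespace Regulated

variable {f : ℝ → ℝ} {a b x ε : ℝ}

theorem exists_abs_sub_lt_left (hf : Regulated f a b) (hx : x ∈ Icc a b) (hε : 0 < ε) :
    ∃ y < x, ∃ L, ∀ u ∈ Icc a b, u ∈ Ioo y x → |f u - L| < ε := by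
  rcases hx.1.eq_or_lt with rfl | hax
  · exact ⟨_, sub_one_lt _, 0, fun u hu hu' => absurd hu.1 (not_le.2 hu'.2)⟩
  obtain ⟨L, hL⟩ := hf.2 x ⟨hax, hx.2⟩
  obtain ⟨y, hy, hsub⟩ := mem_nhdsLT_iff_exists_Ioo_subset.1 (hL (Metric.ball_mem_nhds L hε))
  exact ⟨y, hy, L, fun u _ hu => hsub hu⟩

theorem exists_abs_sub_lt_right (hf : Regulated f a b) (hx : x ∈ Icc a b) (hε : 0 < ε) :
    ∃ z > x, ∃ L, ∀ u ∈ Icc a b, u ∈ Ioo x z → |f u - L| < ε := by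
  rcases hx.2.eq_or_lt with rfl | hxb
  · exact ⟨_, lt_add_one _, 0, fun u hu hu' => absurd hu.2 (not_le.2 hu'.1)⟩
  obtain ⟨L, hL⟩ := hf.1 x ⟨hx.1, hxb⟩
  obtain ⟨z, hz, hsub⟩ := mem_nhdsGT_iff_exists_Ioo_subset.1 (hL (Metric.ball_mem_nhds L hε))
  exact ⟨z, hz, L, fun u _ hu => hsub hu⟩

theorem exists_bound_s12 (hf : Regulated f a b) : ∃ K, ∀ u ∈ Icc a b, |f u| ≤ K := by
  let P : ℝ → Prop := fun x => ∃ K, ∀ u ∈ Icc a b, u ≤ x → |f u| ≤ K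
  have step : ∀ x ∈ Icc a b, (∀ y < x, P y) → ∃ z > x, P z := by
    intro x hx hbelow
    obtain ⟨y, hyx, L₁, hL₁⟩ := hf.exists_abs_sub_lt_left hx one_pos
    obtain ⟨z, hxz, L₂, hL₂⟩ := hf.exists_abs_sub_lt_right hx one_pos
    obtain ⟨K, hK⟩ := hbelow y hyx
    obtain ⟨z', hxz', hz'z⟩ := exists_between hxz
    refine ⟨z', hxz', max (max K |f x|) (max (|L₁| + 1) (|L₂| + 1)), fun u hu huz => ?_⟩
    have near : ∀ L, |f u - L| < 1 → |f u| ≤ |L| + 1 := fun L h => by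
      linarith [abs_sub_abs_le_abs_sub (f u) L]
    rcases le_or_gt u y with huy | hyu
    · exact (hK u hu huy).trans (by simp)
    rcases lt_trichotomy u x with hux | rfl | hxu
    · exact (near L₁ (hL₁ u hu ⟨hyu, hux⟩)).trans (by simp)
    · simp
    · exact (near L₂ (hL₂ u hu ⟨hxu, huz.trans_lt hz'z⟩)).trans (by simp)
  obtain ⟨K, hK⟩ : P b := Antitone.continuous_induction
    (fun x y hxy ⟨K, hK⟩ => ⟨K, fun u hu hux => hK u hu (hux.trans hxy)⟩)
    (fun y hy => ⟨0, fun u hu huy => absurd (hu.1.trans huy) hy.not_ge⟩) step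
  exact ⟨K, fun u hu => hK u hu hu.2⟩

theorem exists_finset_abs_sub_le {c : ℝ} (hf : Regulated f a b) (hc : 0 < c) :
    ∃ F : Finset ℝ, ∀ u ∈ Icc a b, ∀ v ∈ Icc a b, u ≤ v → (∀ p ∈ F, p ∉ Icc u v) →
      |f v - f u| ≤ c := by
  let P : ℝ → Prop := fun x => ∃ F : Finset ℝ, ∀ u ∈ Icc a b, ∀ v ∈ Icc a b, u ≤ v → v ≤ x →
    (∀ p ∈ F, p ∉ Icc u v) → |f v - f u| ≤ c
  have step : ∀ x ∈ Icc a b, (∀ y < x, P y) → ∃ z > x, P z := by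
    intro x hx hbelow
    obtain ⟨y, hyx, L₁, hL₁⟩ := hf.exists_abs_sub_lt_left hx (half_pos hc)
    obtain ⟨z, hxz, L₂, hL₂⟩ := hf.exists_abs_sub_lt_right hx (half_pos hc)
    obtain ⟨F, hF⟩ := hbelow y hyx
    refine ⟨z, hxz, insert y (insert x (insert z F)), fun u hu v hv huv hvz hout => ?_⟩
    have side : ∀ p ∈ insert y (insert x (insert z F)), p < u ∨ v < p := fun p hp => by
      simpa only [mem_Icc, not_and_or, not_le] using hout p hp
    have close : ∀ L, |f u - L| < c / 2 → |f v - L| < c / 2 → |f v - f u| ≤ c :=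
      fun L h₁ h₂ => by
        rw [abs_lt] at h₁ h₂
        rw [abs_le]
        constructor <;> linarith
    have hvz' : v < z := (side z (by simp)).resolve_left fun hzu => (hvz.trans_lt hzu).not_ge huv
    rcases side y (by simp) with hyu | hvy
    · rcases side x (by simp) with hxu | hvx
      · exact close L₂ (hL₂ u hu ⟨hxu, huv.trans_lt hvz'⟩) (hL₂ v hv ⟨hxu.trans_le huv, hvz'⟩)
      · exact close L₁ (hL₁ u hu ⟨hyu, huv.trans_lt hvx⟩) (hL₁ v hv ⟨hyu.trans_le huv, hvx⟩)
    · exact hF u hu v hv huv hvy.le fun p hp => hout p (by simp [hp])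
  obtain ⟨F, hF⟩ : P b := Antitone.continuous_induction
    (fun x y hxy ⟨F, hF⟩ => ⟨F, fun u hu v hv huv hvx => hF u hu v hv huv (hvx.trans hxy)⟩)
    (fun y hy => ⟨∅, fun u hu v _ huv hvy _ => absurd (hu.1.trans (huv.trans hvy)) hy.not_ge⟩)
    step
  exact ⟨F, fun u hu v hv huv => hF u hu v hv huv hv.2⟩

end Regulated

theorem regulated_iff_ttv_finite_general (a b : ℝ) (f : ℝ → ℝ) :
    Regulated f a b ↔ ∀ c : ℝ, 0 < c → TTV f a b c < ⊤ := by
  refine ⟨fun hf c hc => ?_, fun h => ⟨fun t ht => exists_tendsto_nhdsGT_of_ttv_lt_top h ht,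
    fun t ht => exists_tendsto_nhdsLT_of_ttv_lt_top h ht⟩⟩
  obtain ⟨K, hK⟩ := hf.exists_bound_s12
  obtain ⟨F, hF⟩ := hf.exists_finset_abs_sub_le hc
  exact (ttv_le_of_forall_abs_sub_le hK F hF).trans_lt
    (ENNReal.mul_lt_top (ENNReal.natCast_lt_top _) ENNReal.ofReal_lt_top)

/-- A function `f : [a,b] → ℝ` is regulated iff its truncated variation is finite at every
positive truncation level. -/
theorem regulated_iff_ttv_finite (a b : ℝ) (f : ℝ → ℝ) (hab : a < b) :
    Regulated f a b ↔ ∀ c : ℝ, 0 < c → TTV f a b c < ⊤ :=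
  regulated_iff_ttv_finite_general a b f
end

section
/- Let f : [a,b] → ℝ be a regulated function and c > 0. Then UTV^c(f,[a,b]) = inf{UTV^0(g,[a,b]) : g : [a,b] → ℝ, sup_{t ∈ [a,b]} |f(t) − g(t)| ≤ c/2} and DTV^c(f,[a,b]) = inf{DTV^0(g,[a,b]) : g : [a,b] → ℝ, sup_{t ∈ [a,b]} |f(t) − g(t)| ≤ c/2}, and both infima are attained. -/
open MeasureTheory Filter Set
open scoped ENNReal NNReal

/-!
Any `g` with `|f - g| ≤ c/2` on `[a,b]` satisfies `UTV^c(f) ≤ UTV^0(g)` term by term, so it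
suffices to exhibit one such `g` with `UTV^0(g) ≤ UTV^c(f)`. If `UTV^c(f) = ∞` take `g = f`;
otherwise `f` is bounded below on `[a,b]` and we take the lazy function `g` of `f` with
band half-width `r = c/2`: it stays in `[f - r, f + r]` and moves only when `f` pushes it, i.e.
if `g(s) < g(t)` then `f` comes arbitrarily close to `g(t) + r` on `[s,t]`, and if
`g(t) < g(s)` then `f` comes arbitrarily close to `g(t) - r` on `[s,t]`. Along a partition of
`[a,b]`, every rise of `g` is then matched by an increment of `f` from a point near the bottom
of the band to a point near its top, which exceeds `c` by the rise. The `DTV` statements follow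
by applying this to `-f`.
-/

noncomputable section

lemma eq_iInf_and_exists_of_forall_le {α ι : Type*} [CompleteLattice α] {P : ι → Prop}
    {V : ι → α} {x : α} (hle : ∀ i, P i → x ≤ V i) (hex : ∃ i, P i ∧ V i ≤ x) :
    x = (⨅ (i) (_ : P i), V i) ∧ ∃ i, P i ∧ V i = x := by
  obtain ⟨i, hi, hVi⟩ := hex
  exact ⟨le_antisymm (le_iInf₂ hle) (iInf₂_le_of_le i hi hVi), i, hi, hVi.antisymm (hle i hi)⟩

lemma Fin.strictMono_snoc {α : Type*} [Preorder α] {m : ℕ} {w : Fin (m + 1) → α}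
    (hw : StrictMono w) {x : α} (hx : w (Fin.last m) < x) :
    StrictMono (Fin.snoc w x : Fin (m + 2) → α) := by
  refine Fin.strictMono_iff_lt_succ.2 fun i => Fin.lastCases ?_ (fun j => ?_) i
  · simpa using hx
  · simpa [Fin.succ_castSucc, -Fin.castSucc_succ] using hw (Fin.castSucc_lt_succ (i := j))

def upSum (f : ℝ → ℝ) (c : ℝ) {m : ℕ} (w : Fin (m + 1) → ℝ) : ℝ :=
  ∑ j : Fin m, max (f (w j.succ) - f (w j.castSucc) - c) 0

lemma upSum_snoc (f : ℝ → ℝ) (c : ℝ) {m : ℕ} (w : Fin (m + 1) → ℝ) (x : ℝ) :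
    upSum f c (Fin.snoc w x : Fin (m + 2) → ℝ) =
      upSum f c w + max (f x - f (w (Fin.last m)) - c) 0 := by
  simp [upSum, Fin.sum_univ_castSucc, Fin.succ_castSucc, -Fin.castSucc_succ]

lemma UTV_eq_iSup_upSum (f : ℝ → ℝ) (a b c : ℝ) :
    UTV f a b c = ⨆ (n : ℕ) (t : Fin (n + 1) → ℝ) (_ : StrictMono t)
      (_ : ∀ i, t i ∈ Icc a b), ENNReal.ofReal (upSum f c t) := by
  simp only [UTV, upSum, ENNReal.ofReal_sum_of_nonneg fun _ _ => le_max_right _ _,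
    ENNReal.ofReal_max, ENNReal.ofReal_zero, zero_le, max_eq_left]

structure Chain (a t : ℝ) where
  len : ℕ
  pt : Fin (len + 1) → ℝ
  strictMono : StrictMono pt
  mem : ∀ j, pt j ∈ Icc a t

namespace Chain

variable {a s t : ℝ}

def last (w : Chain a t) : ℝ := w.pt (Fin.last w.len)

lemma last_le (w : Chain a t) : w.last ≤ t := (w.mem _).2

def single (x : ℝ) (hx : x ∈ Icc a t) : Chain a t :=
  ⟨0, fun _ => x, Fin.strictMono_iff_lt_succ.2 fun i => i.elim0, fun _ => hx⟩

def widen (w : Chain a s) (h : s ≤ t) : Chain a t :=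
  ⟨w.len, w.pt, w.strictMono, fun j => ⟨(w.mem j).1, (w.mem j).2.trans h⟩⟩

def snoc (w : Chain a s) (x : ℝ) (hlt : w.last < x) (hxt : x ≤ t) : Chain a t where
  len := w.len + 1
  pt := Fin.snoc w.pt x
  strictMono := Fin.strictMono_snoc w.strictMono hlt
  mem := Fin.lastCases (by simpa using ⟨(w.mem _).1.trans hlt.le, hxt⟩)
    fun j => by
      simpa using ⟨(w.mem j).1, (w.strictMono.monotone (Fin.le_last j)).trans (hlt.le.trans hxt)⟩

@[simp] lemma upSum_single (f : ℝ → ℝ) (c x : ℝ) (hx : x ∈ Icc a t) :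
    upSum f c (single x hx).pt = 0 :=
  Fin.sum_univ_zero _

@[simp] lemma last_single (x : ℝ) (hx : x ∈ Icc a t) : (single x hx).last = x := rfl

@[simp] lemma last_widen (w : Chain a s) (h : s ≤ t) : (w.widen h).last = w.last := rfl

@[simp] lemma upSum_widen (f : ℝ → ℝ) (c : ℝ) (w : Chain a s) (h : s ≤ t) :
    upSum f c (w.widen h).pt = upSum f c w.pt := rfl

lemma upSum_snoc (f : ℝ → ℝ) (c : ℝ) (w : Chain a s) {x : ℝ} (hlt : w.last < x) (hxt : x ≤ t) :
    upSum f c (w.snoc x hlt hxt).pt = upSum f c w.pt + max (f x - f w.last - c) 0 :=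
  _root_.upSum_snoc f c w.pt x

lemma last_snoc (w : Chain a s) {x : ℝ} (hlt : w.last < x) (hxt : x ≤ t) :
    (w.snoc x hlt hxt).last = x :=
  Fin.snoc_last (α := fun _ => ℝ) _ _

lemma exists_extend {c : ℝ} (f : ℝ → ℝ) (hc : 0 ≤ c) (w : Chain a s) {x : ℝ} (hsx : s ≤ x)
    (hxt : x ≤ t) : ∃ w' : Chain a t, w'.last = x ∧
      upSum f c w.pt + max (f x - f w.last - c) 0 ≤ upSum f c w'.pt := by
  rcases (w.last_le.trans hsx).lt_or_eq with hlt | heq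
  · exact ⟨w.snoc x hlt hxt, w.last_snoc hlt hxt, (w.upSum_snoc f c hlt hxt).ge⟩
  · refine ⟨w.widen (hsx.trans hxt), heq, ?_⟩
    simp [heq, hc]

lemma ofReal_upSum_le_UTV (f : ℝ → ℝ) (c : ℝ) {b : ℝ} (w : Chain a b) :
    ENNReal.ofReal (upSum f c w.pt) ≤ UTV f a b c := by
  rw [UTV_eq_iSup_upSum]
  exact le_iSup_of_le w.len <| le_iSup_of_le w.pt <| le_iSup_of_le w.strictMono <|
    le_iSup_of_le w.mem le_rfl

end Chain

lemma UTV_le_of_forall_chain {f : ℝ → ℝ} {a b c : ℝ} {X : ℝ≥0∞}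
    (h : ∀ w : Chain a b, ENNReal.ofReal (upSum f c w.pt) ≤ X) : UTV f a b c ≤ X := by
  rw [UTV_eq_iSup_upSum]
  exact iSup_le fun n => iSup_le fun t => iSup_le fun ht => iSup_le fun hmem => h ⟨n, t, ht, hmem⟩

section TruncatedVariation

variable {f g : ℝ → ℝ} {a b c : ℝ}

lemma UTV_le_of_close (hg : ∀ t ∈ Icc a b, |f t - g t| ≤ c / 2) :
    UTV f a b c ≤ UTV g a b 0 := by
  refine UTV_le_of_forall_chain fun w => le_trans ?_ (w.ofReal_upSum_le_UTV g 0)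
  refine ENNReal.ofReal_le_ofReal (Finset.sum_le_sum fun j _ => max_le_max_right 0 ?_)
  have h₁ := abs_le.1 (hg _ (w.mem j.succ))
  have h₂ := abs_le.1 (hg _ (w.mem j.castSucc))
  linarith [h₁.1, h₂.2]

lemma bddBelow_of_UTV_ne_top (hc : 0 ≤ c) (h : UTV f a b c ≠ ⊤) : BddBelow (f '' Icc a b) := by
  refine ⟨f b - c - (UTV f a b c).toReal, ?_⟩
  rintro _ ⟨t, ht, rfl⟩
  obtain ⟨w, -, hw⟩ := (Chain.single t (right_mem_Icc.2 ht.1)).exists_extend f hc ht.2 le_rfl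
  have hUTV := (ENNReal.ofReal_le_iff_le_toReal h).1 (w.ofReal_upSum_le_UTV f c)
  simp only [Chain.upSum_single, Chain.last_single, zero_add] at hw
  linarith [le_max_left (f b - f t - c) 0]

lemma UTV_neg (f : ℝ → ℝ) (a b c : ℝ) : UTV (fun t => -f t) a b c = DTV f a b c := by
  simp only [UTV, DTV, sub_neg_eq_add, neg_add_eq_sub]

end TruncatedVariation

section PlayOperator

variable {f : ℝ → ℝ} {a r s t u : ℝ}

def intervalInf (f : ℝ → ℝ) (s t : ℝ) : ℝ := sInf (f '' Icc s t)

/-- The level reached at time `t` if `f` pushes it up to `f σ - r` at time `σ` and afterwards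
only pushes it down. -/
def pushLevel (f : ℝ → ℝ) (r σ t : ℝ) : ℝ := min (f σ - r) (intervalInf f σ t + r)

def pushSup (f : ℝ → ℝ) (r s t : ℝ) : ℝ := sSup ((fun σ => pushLevel f r σ t) '' Icc s t)

/-- The lazy function of `f` on `[a, ∞)` with band half-width `r` (the output of the play
operator started at the top of the band). -/
def lazyFun (f : ℝ → ℝ) (a r t : ℝ) : ℝ := max (intervalInf f a t + r) (pushSup f r a t)

lemma intervalInf_le (hbd : BddBelow (f '' Icc s t)) {x : ℝ} (hx : x ∈ Icc s t) :
    intervalInf f s t ≤ f x :=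
  csInf_le hbd (mem_image_of_mem f hx)

lemma intervalInf_self (f : ℝ → ℝ) (t : ℝ) : intervalInf f t t = f t := by
  simp [intervalInf]

lemma exists_lt_intervalInf_add (hst : s ≤ t) {ε : ℝ} (hε : 0 < ε) :
    ∃ x ∈ Icc s t, f x < intervalInf f s t + ε := by
  obtain ⟨_, ⟨x, hx, rfl⟩, hlt⟩ :=
    exists_lt_of_csInf_lt ((nonempty_Icc.2 hst).image f) (lt_add_of_pos_right _ hε)
  exact ⟨x, hx, hlt⟩

lemma intervalInf_split (hbd : BddBelow (f '' Icc s t)) (hsu : s ≤ u) (hut : u ≤ t) :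
    intervalInf f s t = min (intervalInf f s u) (intervalInf f u t) := by
  rw [← Icc_union_Icc_eq_Icc hsu hut, image_union] at hbd
  rw [intervalInf, ← Icc_union_Icc_eq_Icc hsu hut, image_union]
  exact csInf_union (hbd.mono subset_union_left) ((nonempty_Icc.2 hsu).image f)
    (hbd.mono subset_union_right) ((nonempty_Icc.2 hut).image f)

lemma pushLevel_le (hbd : BddBelow (f '' Icc s t)) {σ : ℝ} (hσ : σ ∈ Icc s t) :
    pushLevel f r σ t ≤ f t + r :=
  (min_le_right _ _).trans <| by
    gcongr
    exact intervalInf_le (hbd.mono (image_mono (Icc_subset_Icc_left hσ.1))) ⟨hσ.2, le_rfl⟩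

lemma bddAbove_pushLevel (hbd : BddBelow (f '' Icc s t)) :
    BddAbove ((fun σ => pushLevel f r σ t) '' Icc s t) :=
  ⟨f t + r, by rintro _ ⟨σ, hσ, rfl⟩; exact pushLevel_le hbd hσ⟩

lemma pushSup_split (hbd : BddBelow (f '' Icc s t)) (hsu : s ≤ u) (hut : u ≤ t) :
    pushSup f r s t =
      max (min (pushSup f r s u) (intervalInf f u t + r)) (pushSup f r u t) := by
  have hbd₁ : BddBelow (f '' Icc s u) := hbd.mono (image_mono (Icc_subset_Icc_right hut))
  have himage : (fun σ => pushLevel f r σ t) '' Icc s u =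
      (fun x => min x (intervalInf f u t + r)) '' ((fun σ => pushLevel f r σ u) '' Icc s u) := by
    rw [image_image]
    refine image_congr fun σ hσ => ?_
    rw [pushLevel, pushLevel, intervalInf_split
      (hbd.mono (image_mono (Icc_subset_Icc hσ.1 le_rfl))) hσ.2 hut, ← min_add_add_right,
      min_assoc]
  have hmono : Monotone fun x => min x (intervalInf f u t + r) :=
    fun _ _ h => min_le_min_right _ h
  have hcont : Continuous fun x => min x (intervalInf f u t + r) :=
    continuous_id.min continuous_const
  rw [pushSup, ← Icc_union_Icc_eq_Icc hsu hut, image_union,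
    csSup_union ((bddAbove_pushLevel hbd).mono (image_mono (Icc_subset_Icc_right hut)))
      ((nonempty_Icc.2 hsu).image _)
      ((bddAbove_pushLevel hbd).mono (image_mono (Icc_subset_Icc_left hsu)))
      ((nonempty_Icc.2 hut).image _), himage, ← hmono.map_csSup_of_continuousAt
      hcont.continuousAt ((nonempty_Icc.2 hsu).image _)
      (bddAbove_pushLevel hbd₁)]
  rfl

lemma lazyFun_split (hbd : BddBelow (f '' Icc a t)) (has : a ≤ s) (hst : s ≤ t) :
    lazyFun f a r t =
      max (min (lazyFun f a r s) (intervalInf f s t + r)) (pushSup f r s t) := by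
  rw [lazyFun, intervalInf_split hbd has hst, pushSup_split hbd has hst, lazyFun,
    ← min_add_add_right, min_max_distrib_right, max_assoc]

lemma sub_le_lazyFun (hr : 0 ≤ r) (hbd : BddBelow (f '' Icc a t)) (hat : a ≤ t) :
    f t - r ≤ lazyFun f a r t := by
  have hlevel : pushLevel f r t t = f t - r := by
    rw [pushLevel, intervalInf_self, min_eq_left (by linarith)]
  exact le_max_of_le_right <| hlevel ▸
    le_csSup (bddAbove_pushLevel hbd) (mem_image_of_mem _ ⟨hat, le_rfl⟩)

lemma lazyFun_le_add (hbd : BddBelow (f '' Icc a t)) (hat : a ≤ t) :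
    lazyFun f a r t ≤ f t + r := by
  refine max_le (by gcongr; exact intervalInf_le hbd ⟨hat, le_rfl⟩) ?_
  exact csSup_le ((nonempty_Icc.2 hat).image _) fun _ ⟨_, hσ, hlevel⟩ =>
    hlevel ▸ pushLevel_le hbd hσ

lemma abs_sub_lazyFun_le (hr : 0 ≤ r) (hbd : BddBelow (f '' Icc a t)) (hat : a ≤ t) :
    |f t - lazyFun f a r t| ≤ r := by
  have := sub_le_lazyFun hr hbd hat
  have := lazyFun_le_add (r := r) hbd hat
  exact abs_sub_le_iff.2 ⟨by linarith, by linarith⟩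

lemma exists_lt_lazyFun_sub (hat : a ≤ t) {ε : ℝ} (hε : 0 < ε) :
    ∃ x ∈ Icc a t, f x < lazyFun f a r t - r + ε := by
  obtain ⟨x, hx, hfx⟩ := exists_lt_intervalInf_add (f := f) hat hε
  have hinf : intervalInf f a t + r ≤ lazyFun f a r t := le_max_left _ _
  exact ⟨x, hx, by linarith⟩

lemma exists_lt_lazyFun_sub_of_lt (hbd : BddBelow (f '' Icc a t)) (has : a ≤ s) (hst : s ≤ t)
    {ε : ℝ} (hε : 0 < ε) (hfall : lazyFun f a r t < lazyFun f a r s) :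
    ∃ x ∈ Icc s t, f x < lazyFun f a r t - r + ε := by
  have hmin : min (lazyFun f a r s) (intervalInf f s t + r) ≤ lazyFun f a r t :=
    lazyFun_split hbd has hst ▸ le_max_left _ _
  have hinf : intervalInf f s t + r ≤ lazyFun f a r t :=
    (min_le_iff.1 hmin).resolve_left (not_le.2 hfall)
  obtain ⟨x, hx, hfx⟩ := exists_lt_intervalInf_add (f := f) hst hε
  exact ⟨x, hx, by linarith⟩

lemma exists_lazyFun_add_lt_of_lt (hbd : BddBelow (f '' Icc a t)) (has : a ≤ s) (hst : s ≤ t)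
    {ε : ℝ} (hε : 0 < ε) (hrise : lazyFun f a r s < lazyFun f a r t) :
    ∃ σ ∈ Icc s t, lazyFun f a r t + r - ε < f σ := by
  have hsplit := lazyFun_split (r := r) hbd has hst
  have hpush : lazyFun f a r t ≤ pushSup f r s t := by
    rw [hsplit] at hrise ⊢
    refine max_le ?_ le_rfl
    rcases lt_max_iff.1 hrise with h | h
    · exact absurd h (min_le_left _ _).not_gt
    · exact (min_le_left _ _).trans h.le
  obtain ⟨_, ⟨σ, hσ, rfl⟩, hlt⟩ := exists_lt_of_lt_csSup ((nonempty_Icc.2 hst).image _)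
    (show lazyFun f a r t - ε < pushSup f r s t by linarith)
  exact ⟨σ, hσ, by linarith [(lt_min_iff.1 hlt).1]⟩

end PlayOperator

section LazyBound

variable {f : ℝ → ℝ} {a c s t P : ℝ}

/-- Invariant along a partition of `[a,t]` on which `g = lazyFun f a (c / 2)` has accumulated
positive variation `P`: up to any `ε > 0`, `P` is dominated by an upward `c`-sum of `f` over a
chain in `[a,t]`, and also by such a sum plus `g t - c / 2 - f w.last`; the latter lets a later
rise of `g` be charged to an increment of `f` starting from `w.last`. -/
def LazyInvariant (f : ℝ → ℝ) (a c t P : ℝ) : Prop :=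
  ∀ ε > 0, (∃ w : Chain a t, P ≤ upSum f c w.pt + ε) ∧
    ∃ w : Chain a t, P + f w.last ≤ upSum f c w.pt + lazyFun f a (c / 2) t - c / 2 + ε

lemma lazyInvariant_zero (hat : a ≤ t) : LazyInvariant f a c t 0 := by
  intro ε hε
  obtain ⟨x, hx, hfx⟩ := exists_lt_lazyFun_sub (f := f) (r := c / 2) hat hε
  exact ⟨⟨Chain.single t (right_mem_Icc.2 hat), by simp; linarith⟩,
    Chain.single x hx, by simp; linarith⟩

lemma LazyInvariant.step (hc : 0 ≤ c) (hbd : BddBelow (f '' Icc a t)) (has : a ≤ s)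
    (hst : s ≤ t) (hP : LazyInvariant f a c s P) :
    LazyInvariant f a c t (P + max (lazyFun f a (c / 2) t - lazyFun f a (c / 2) s) 0) := by
  intro ε hε
  obtain ⟨⟨w₁, hw₁⟩, w₂, hw₂⟩ := hP (ε / 2) (half_pos hε)
  rcases le_or_gt (lazyFun f a (c / 2) t) (lazyFun f a (c / 2) s) with hle | hrise
  · rw [max_eq_right (sub_nonpos.2 hle)]
    refine ⟨⟨w₁.widen hst, by simp; linarith⟩, ?_⟩
    rcases hle.lt_or_eq with hfall | heq
    · obtain ⟨x, hx, hfx⟩ := exists_lt_lazyFun_sub_of_lt hbd has hst (half_pos hε) hfall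
      obtain ⟨w, rfl, hw⟩ := w₁.exists_extend f hc hx.1 hx.2
      exact ⟨w, by linarith [le_max_right (f w.last - f w₁.last - c) 0]⟩
    · exact ⟨w₂.widen hst, by simp; linarith⟩
  · rw [max_eq_left (sub_nonneg.2 hrise.le)]
    obtain ⟨σ, hσ, hfσ⟩ := exists_lazyFun_add_lt_of_lt hbd has hst (half_pos hε) hrise
    obtain ⟨w, -, hw⟩ := w₂.exists_extend f hc hσ.1 hσ.2
    exact ⟨⟨w, by linarith [le_max_left (f σ - f w₂.last - c) 0]⟩,
      w₂.widen hst, by simp; linarith⟩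

lemma lazyInvariant_upSum (hc : 0 ≤ c) {b : ℝ} (hbd : BddBelow (f '' Icc a b)) :
    ∀ {n : ℕ} (u : Fin (n + 1) → ℝ), Monotone u → (∀ i, u i ∈ Icc a b) →
      LazyInvariant f a c (u (Fin.last n)) (upSum (lazyFun f a (c / 2)) 0 u)
  | 0, u, _, hu => by simpa [upSum] using lazyInvariant_zero (hu 0).1
  | n + 1, u, hmono, hu => by
    have hsplit := upSum_snoc (lazyFun f a (c / 2)) 0 (Fin.init u) (u (Fin.last (n + 1)))
    rw [Fin.snoc_init_self, sub_zero] at hsplit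
    rw [hsplit]
    have hinit := lazyInvariant_upSum hc hbd (Fin.init u)
      (hmono.comp Fin.strictMono_castSucc.monotone) fun i => hu _
    exact hinit.step hc (hbd.mono (image_mono (Icc_subset_Icc_right (hu _).2))) (hu _).1
      (hmono (Fin.castSucc_lt_last _).le)

lemma UTV_lazyFun_le (hc : 0 ≤ c) {b : ℝ} (hbd : BddBelow (f '' Icc a b)) :
    UTV (lazyFun f a (c / 2)) a b 0 ≤ UTV f a b c := by
  refine UTV_le_of_forall_chain fun u => ENNReal.le_of_forall_pos_le_add fun ε hε _ => ?_
  obtain ⟨⟨w, hw⟩, -⟩ :=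
    lazyInvariant_upSum hc hbd u.pt u.strictMono.monotone u.mem ε hε
  calc ENNReal.ofReal (upSum (lazyFun f a (c / 2)) 0 u.pt)
      ≤ ENNReal.ofReal (upSum f c w.pt) + ENNReal.ofReal ε :=
        (ENNReal.ofReal_le_ofReal hw).trans ENNReal.ofReal_add_le
    _ ≤ UTV f a b c + ε := by
        rw [ENNReal.ofReal_coe_nnreal]
        gcongr
        exact (w.widen u.last_le).ofReal_upSum_le_UTV f c

end LazyBound

section Approximation

variable {f : ℝ → ℝ} {a b c : ℝ}

lemma exists_close_UTV_le (hc : 0 ≤ c) :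
    ∃ g : ℝ → ℝ, (∀ t ∈ Icc a b, |f t - g t| ≤ c / 2) ∧ UTV g a b 0 ≤ UTV f a b c := by
  by_cases htop : UTV f a b c = ⊤
  · exact ⟨f, fun t _ => by rw [sub_self, abs_zero]; positivity, htop ▸ le_top⟩
  · have hbd := bddBelow_of_UTV_ne_top hc htop
    exact ⟨lazyFun f a (c / 2), fun t ht => abs_sub_lazyFun_le (by positivity)
      (hbd.mono (image_mono (Icc_subset_Icc_right ht.2))) ht.1, UTV_lazyFun_le hc hbd⟩

lemma DTV_le_of_close {g : ℝ → ℝ} (hg : ∀ t ∈ Icc a b, |f t - g t| ≤ c / 2) :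
    DTV f a b c ≤ DTV g a b 0 := by
  rw [← UTV_neg f, ← UTV_neg g]
  exact UTV_le_of_close fun t ht => by rw [neg_sub_neg, abs_sub_comm]; exact hg t ht

lemma exists_close_DTV_le (hc : 0 ≤ c) :
    ∃ g : ℝ → ℝ, (∀ t ∈ Icc a b, |f t - g t| ≤ c / 2) ∧ DTV g a b 0 ≤ DTV f a b c := by
  obtain ⟨g, hg, hle⟩ := exists_close_UTV_le (f := fun t => -f t) (a := a) (b := b) hc
  refine ⟨fun t => -g t, fun t ht => ?_, ?_⟩
  · rw [← abs_neg]
    convert hg t ht using 2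
    ring
  · rw [← UTV_neg, ← UTV_neg]; simpa using hle

end Approximation

end

theorem utv_dtv_eq_inf_general (a b c : ℝ) (f : ℝ → ℝ) (hc : 0 < c) :
    (UTV f a b c =
      ⨅ (g : ℝ → ℝ) (_ : ∀ t ∈ Set.Icc a b, |f t - g t| ≤ c / 2), UTV g a b 0) ∧
    (∃ g : ℝ → ℝ, (∀ t ∈ Set.Icc a b, |f t - g t| ≤ c / 2) ∧ UTV g a b 0 = UTV f a b c) ∧
    (DTV f a b c =
      ⨅ (g : ℝ → ℝ) (_ : ∀ t ∈ Set.Icc a b, |f t - g t| ≤ c / 2), DTV g a b 0) ∧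
    (∃ g : ℝ → ℝ, (∀ t ∈ Set.Icc a b, |f t - g t| ≤ c / 2) ∧ DTV g a b 0 = DTV f a b c) := by
  obtain ⟨hUTV, hUTV_attained⟩ :=
    eq_iInf_and_exists_of_forall_le (fun _ => UTV_le_of_close) (exists_close_UTV_le hc.le)
  obtain ⟨hDTV, hDTV_attained⟩ :=
    eq_iInf_and_exists_of_forall_le (fun _ => DTV_le_of_close) (exists_close_DTV_le hc.le)
  exact ⟨hUTV, hUTV_attained, hDTV, hDTV_attained⟩

/-- Variational property of the upward and downward truncated variations: for regulated `f`
and `c > 0`, `UTV^c(f,[a,b])` (resp. `DTV^c(f,[a,b])`) is the attained infimum of the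
positive (resp. negative) variations of functions uniformly approximating `f` with
accuracy `c/2`. -/
theorem utv_dtv_eq_inf (a b c : ℝ) (f : ℝ → ℝ) (hab : a < b)
    (hf : Regulated f a b) (hc : 0 < c) :
    (UTV f a b c =
      ⨅ (g : ℝ → ℝ) (_ : ∀ t ∈ Set.Icc a b, |f t - g t| ≤ c / 2), UTV g a b 0) ∧
    (∃ g : ℝ → ℝ, (∀ t ∈ Set.Icc a b, |f t - g t| ≤ c / 2) ∧ UTV g a b 0 = UTV f a b c) ∧
    (DTV f a b c =
      ⨅ (g : ℝ → ℝ) (_ : ∀ t ∈ Set.Icc a b, |f t - g t| ≤ c / 2), DTV g a b 0) ∧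
    (∃ g : ℝ → ℝ, (∀ t ∈ Set.Icc a b, |f t - g t| ≤ c / 2) ∧ DTV g a b 0 = DTV f a b c) :=
  utv_dtv_eq_inf_general a b c f hc
end

section
/- Let f : [a,b] → ℝ be a regulated function and c > 0. Then the truncated variation decomposes as the sum of the upward and downward truncated variations: TTV^c(f,[a,b]) = UTV^c(f,[a,b]) + DTV^c(f,[a,b]). -/
open MeasureTheory Filter Set
open scoped ENNReal NNReal

/-!
`TTV ≤ UTV + DTV` holds termwise, since `(|x| - c)⁺ ≤ (x - c)⁺ + (-x - c)⁺`. For the converse, an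
up-partition and a down-partition are merged into one chain of non-overlapping intervals whose
truncated absolute increments dominate both sums together; such a chain embeds in a partition of
`[a, b]` without decreasing the sum (an interval of length zero contributes `(-c)⁺ = 0`).

The merge is by induction on the number of intervals. Compare the first up-interval `[p, q]` with
the first down-interval `[u, v]`, where `p ≤ u` up to replacing `f` by `-f`. If `q ≤ u`, emit
`[p, q]`. If `u < q ≤ v`, emit `[p, u]` when `f q ≤ f u`; otherwise emit `[p, q]` and shrink the
down-interval to `[q, v]`. If `v < q`, split `[p, q]` into `[p, u]`, `[u, v]`, `[v, q]`: this loses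
`f v - f u + c`, which is nonpositive as soon as the down-increment over `[u, v]` counts at all.
-/

noncomputable section

namespace TruncatedVariation

def IsIntervalChain (lo hi : ℝ) : List (ℝ × ℝ) → Prop
  | [] => True
  | x :: L => lo ≤ x.1 ∧ x.1 ≤ x.2 ∧ x.2 ≤ hi ∧ IsIntervalChain x.2 hi L

theorem IsIntervalChain.mono_left {lo lo' hi : ℝ} {L : List (ℝ × ℝ)} (h : lo' ≤ lo)
    (hL : IsIntervalChain lo hi L) : IsIntervalChain lo' hi L := by
  cases L with
  | nil => trivial
  | cons x L => exact ⟨h.trans hL.1, hL.2⟩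

def chainSum (g : ℝ → ℝ → ℝ) (L : List (ℝ × ℝ)) : ℝ :=
  (L.map fun x => (g x.1 x.2)⁺).sum

@[simp]
theorem chainSum_nil (g : ℝ → ℝ → ℝ) : chainSum g [] = 0 := rfl

@[simp]
theorem chainSum_cons (g : ℝ → ℝ → ℝ) (x : ℝ × ℝ) (L : List (ℝ × ℝ)) :
    chainSum g (x :: L) = (g x.1 x.2)⁺ + chainSum g L := List.sum_cons

theorem chainSum_nonneg (g : ℝ → ℝ → ℝ) (L : List (ℝ × ℝ)) : 0 ≤ chainSum g L :=
  List.sum_nonneg fun _ hx => by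
    obtain ⟨x, -, rfl⟩ := List.mem_map.1 hx
    exact posPart_nonneg _

theorem chainSum_mono {g g' : ℝ → ℝ → ℝ} (h : ∀ p q, g p q ≤ g' p q) (L : List (ℝ × ℝ)) :
    chainSum g L ≤ chainSum g' L := by
  induction L with
  | nil => exact le_rfl
  | cons x L ih => simpa only [chainSum_cons] using add_le_add (posPart_mono (h _ _)) ih

def upSum (f : ℝ → ℝ) (c : ℝ) : List (ℝ × ℝ) → ℝ := chainSum fun p q => f q - f p - c

def absSum (f : ℝ → ℝ) (c : ℝ) : List (ℝ × ℝ) → ℝ := chainSum fun p q => |f q - f p| - c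

theorem absSum_cons (f : ℝ → ℝ) (c p q : ℝ) (R : List (ℝ × ℝ)) :
    absSum f c ((p, q) :: R) = (|f q - f p| - c)⁺ + absSum f c R :=
  chainSum_cons _ _ _

theorem absSum_neg (f : ℝ → ℝ) (c : ℝ) : absSum (-f) c = absSum f c := by
  simp only [absSum, Pi.neg_apply, neg_sub_neg, abs_sub_comm]

theorem upSum_le_absSum (f : ℝ → ℝ) (c : ℝ) (L : List (ℝ × ℝ)) : upSum f c L ≤ absSum f c L :=
  chainSum_mono (fun _ _ => sub_le_sub_right (le_abs_self _) c) L

theorem upSum_neg_le_absSum (f : ℝ → ℝ) (c : ℝ) (L : List (ℝ × ℝ)) :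
    upSum (-f) c L ≤ absSum f c L :=
  absSum_neg f c ▸ upSum_le_absSum (-f) c L

def UpDownDominated (f : ℝ → ℝ) (c lo hi : ℝ) (P Q : List (ℝ × ℝ)) : Prop :=
  ∃ R, IsIntervalChain lo hi R ∧ upSum f c P + upSum (-f) c Q ≤ absSum f c R

theorem UpDownDominated.of_neg {f : ℝ → ℝ} {c lo hi : ℝ} {P Q : List (ℝ × ℝ)}
    (h : UpDownDominated (-f) c lo hi Q P) : UpDownDominated f c lo hi P Q := by
  obtain ⟨R, hR, hsum⟩ := h
  rw [neg_neg, absSum_neg] at hsum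
  exact ⟨R, hR, by linarith⟩

theorem upDownDominated_cons_cons {f : ℝ → ℝ} {c lo hi p q u v : ℝ} {P Q : List (ℝ × ℝ)}
    (hpu : p ≤ u) (hP : IsIntervalChain lo hi ((p, q) :: P))
    (hQ : IsIntervalChain lo hi ((u, v) :: Q))
    (ih : ∀ lo' P' Q', P'.length + Q'.length < P.length + Q.length + 2 →
      IsIntervalChain lo' hi P' → IsIntervalChain lo' hi Q' → UpDownDominated f c lo' hi P' Q') :
    UpDownDominated f c lo hi ((p, q) :: P) ((u, v) :: Q) := by
  obtain ⟨hlp, hpq, hqhi, hP⟩ : lo ≤ p ∧ p ≤ q ∧ q ≤ hi ∧ IsIntervalChain q hi P := hP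
  obtain ⟨hlu, huv, hvhi, hQ⟩ : lo ≤ u ∧ u ≤ v ∧ v ≤ hi ∧ IsIntervalChain v hi Q := hQ
  simp only [UpDownDominated, upSum, absSum, chainSum_cons, Pi.neg_apply, neg_sub_neg] at ih ⊢
  have hup : (f q - f p - c)⁺ ≤ (|f q - f p| - c)⁺ :=
    posPart_mono (sub_le_sub_right (le_abs_self _) c)
  rcases le_or_gt q u with hqu | huq
  · obtain ⟨R, hR, hsum⟩ := ih q P ((u, v) :: Q) (by simp; omega) hP ⟨hqu, huv, hvhi, hQ⟩
    refine ⟨(p, q) :: R, ⟨hlp, hpq, hqhi, hR⟩, ?_⟩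
    simp only [chainSum_cons] at hsum ⊢
    linarith
  rcases le_or_gt q v with hqv | hvq
  · rcases le_total (f q) (f u) with hfqu | hfuq
    · obtain ⟨R, hR, hsum⟩ := ih u P ((u, v) :: Q) (by simp; omega)
        (hP.mono_left huq.le) ⟨le_rfl, huv, hvhi, hQ⟩
      refine ⟨(p, u) :: R, ⟨hlp, hpu, huv.trans hvhi, hR⟩, ?_⟩
      have : (f q - f p - c)⁺ ≤ (|f u - f p| - c)⁺ :=
        posPart_mono (by linarith [le_abs_self (f u - f p)])
      simp only [chainSum_cons] at hsum ⊢
      linarith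
    · obtain ⟨R, hR, hsum⟩ := ih q P ((q, v) :: Q) (by simp; omega) hP
        ⟨le_rfl, hqv, hvhi, hQ⟩
      refine ⟨(p, q) :: R, ⟨hlp, hpq, hqhi, hR⟩, ?_⟩
      have : (f u - f v - c)⁺ ≤ (f q - f v - c)⁺ := posPart_mono (by linarith)
      simp only [chainSum_cons] at hsum ⊢
      linarith
  by_cases hsmall : f u - f v ≤ c
  · obtain ⟨R, hR, hsum⟩ := ih lo ((p, q) :: P) Q (by simp; omega)
      ⟨hlp, hpq, hqhi, hP⟩ (hQ.mono_left (hlu.trans huv))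
    refine ⟨R, hR, ?_⟩
    have : (f u - f v - c)⁺ = 0 := posPart_eq_zero.2 (by linarith)
    simp only [chainSum_cons] at hsum ⊢
    linarith
  · obtain ⟨R, hR, hsum⟩ := ih v ((v, q) :: P) Q (by simp; omega)
      ⟨le_rfl, hvq.le, hqhi, hP⟩ hQ
    refine ⟨(p, u) :: (u, v) :: R, ⟨hlp, hpu, huv.trans hvhi, le_rfl, huv, hvhi, hR⟩, ?_⟩
    have hsplit : (f q - f p - c)⁺ ≤ (|f u - f p| - c)⁺ + (f q - f v - c)⁺ :=
      sup_le (by linarith [le_abs_self (f u - f p), le_posPart (|f u - f p| - c),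
          le_posPart (f q - f v - c)])
        (add_nonneg (posPart_nonneg _) (posPart_nonneg _))
    have hdown : f u - f v - c ≤ (|f v - f u| - c)⁺ :=
      le_trans (by rw [abs_sub_comm]; linarith [le_abs_self (f u - f v)]) (le_posPart _)
    simp only [chainSum_cons] at hsum ⊢
    linarith [posPart_eq_self.2 (by linarith : 0 ≤ f u - f v - c)]

theorem upDownDominated (f : ℝ → ℝ) (c : ℝ) {lo hi : ℝ} {P Q : List (ℝ × ℝ)}
    (hP : IsIntervalChain lo hi P) (hQ : IsIntervalChain lo hi Q) :
    UpDownDominated f c lo hi P Q := by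
  induction hn : P.length + Q.length using Nat.strong_induction_on generalizing f lo P Q with
  | _ n ih =>
  rcases P with _ | ⟨⟨p, q⟩, P⟩
  · exact ⟨Q, hQ, (zero_add _).trans_le (upSum_neg_le_absSum f c Q)⟩
  rcases Q with _ | ⟨⟨u, v⟩, Q⟩
  · exact ⟨_, hP, (add_zero _).trans_le (upSum_le_absSum f c _)⟩
  simp only [List.length_cons] at hn
  rcases le_total p u with hpu | hup
  · exact upDownDominated_cons_cons hpu hP hQ fun lo' P' Q' hlt hP' hQ' =>
      ih (P'.length + Q'.length) (by omega) f hP' hQ' rfl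
  · exact (upDownDominated_cons_cons hup hQ hP fun lo' P' Q' hlt hP' hQ' =>
      ih (P'.length + Q'.length) (by omega) (-f) hP' hQ' rfl).of_neg

theorem ofReal_posPart (x : ℝ) : ENNReal.ofReal x⁺ = ENNReal.ofReal x := by
  simp [posPart_def]

abbrev Partition (a b : ℝ) : Type :=
  Σ n : ℕ, {t : Fin (n + 1) → ℝ // StrictMono t ∧ ∀ i, t i ∈ Icc a b}

def partitionSum {n : ℕ} (g : ℝ → ℝ → ℝ) (t : Fin (n + 1) → ℝ) : ℝ≥0∞ :=
  ∑ i : Fin n, ENNReal.ofReal (g (t i.castSucc) (t i.succ))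

theorem partitionSum_vecCons {n : ℕ} (g : ℝ → ℝ → ℝ) (x : ℝ) (t : Fin (n + 1) → ℝ) :
    partitionSum g (Matrix.vecCons x t) = ENNReal.ofReal (g x (t 0)) + partitionSum g t := by
  simp [partitionSum, Fin.sum_univ_succ]

theorem iSup_partition {a b : ℝ} (S : ∀ n : ℕ, (Fin (n + 1) → ℝ) → ℝ≥0∞) :
    ⨆ (n : ℕ) (t : Fin (n + 1) → ℝ) (_ : StrictMono t) (_ : ∀ i, t i ∈ Icc a b), S n t =
      ⨆ x : Partition a b, S x.1 x.2.1 := by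
  simp only [iSup_sigma, iSup_subtype, iSup_and]

theorem TTV_eq_iSup (f : ℝ → ℝ) (a b c : ℝ) :
    TTV f a b c = ⨆ x : Partition a b, partitionSum (fun p q => |f q - f p| - c) x.2.1 :=
  iSup_partition _

theorem UTV_eq_iSup (f : ℝ → ℝ) (a b c : ℝ) :
    UTV f a b c = ⨆ x : Partition a b, partitionSum (fun p q => f q - f p - c) x.2.1 :=
  iSup_partition _

theorem DTV_eq_UTV_neg (f : ℝ → ℝ) (a b c : ℝ) : DTV f a b c = UTV (-f) a b c := by
  simp only [DTV, UTV, Pi.neg_apply, neg_sub_neg]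

theorem ofReal_abs_sub_le (x c : ℝ) :
    ENNReal.ofReal (|x| - c) ≤ ENNReal.ofReal (x - c) + ENNReal.ofReal (-x - c) := by
  rcases abs_cases x with ⟨h, -⟩ | ⟨h, -⟩ <;> rw [h]
  exacts [le_self_add, le_add_self]

theorem TTV_le_UTV_add_DTV (f : ℝ → ℝ) (a b c : ℝ) : TTV f a b c ≤ UTV f a b c + DTV f a b c := by
  rw [TTV_eq_iSup, DTV_eq_UTV_neg, UTV_eq_iSup, UTV_eq_iSup]
  refine iSup_le fun x => le_trans ?_ (add_le_add (le_iSup _ x) (le_iSup _ x))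
  simp only [partitionSum, ← Finset.sum_add_distrib, Pi.neg_apply, neg_sub_neg]
  gcongr with i
  simpa only [neg_sub] using ofReal_abs_sub_le (f _ - f _) c

def intervalsOf {n : ℕ} (t : Fin (n + 1) → ℝ) : List (ℝ × ℝ) :=
  List.ofFn fun i : Fin n => (t i.castSucc, t i.succ)

theorem partitionSum_eq_ofReal_chainSum {n : ℕ} (g : ℝ → ℝ → ℝ) (t : Fin (n + 1) → ℝ) :
    partitionSum g t = ENNReal.ofReal (chainSum g (intervalsOf t)) := by
  simp only [chainSum, intervalsOf, List.map_ofFn, List.sum_ofFn, Function.comp_apply]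
  rw [ENNReal.ofReal_sum_of_nonneg fun _ _ => posPart_nonneg _]
  simp only [partitionSum, ofReal_posPart]

theorem isIntervalChain_intervalsOf {hi : ℝ} :
    ∀ {n : ℕ} {t : Fin (n + 1) → ℝ}, Monotone t → (∀ i, t i ≤ hi) →
      IsIntervalChain (t 0) hi (intervalsOf t)
  | 0, _, _, _ => trivial
  | n + 1, t, ht, hhi => by
    rw [intervalsOf, List.ofFn_succ]
    refine ⟨le_rfl, ht (Fin.zero_le _), hhi _, ?_⟩
    have htail : intervalsOf (fun i => t i.succ) =
        List.ofFn fun i : Fin n => (t i.succ.castSucc, t i.succ.succ) := by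
      simp only [intervalsOf, Fin.succ_castSucc]
    simpa only [htail] using isIntervalChain_intervalsOf (t := fun i => t i.succ)
      (ht.comp Fin.strictMono_succ.monotone) fun i => hhi i.succ

theorem ofReal_add_TTV_le (f : ℝ → ℝ) (c : ℝ) {lo p q hi : ℝ} (hlp : lo ≤ p) (hpq : p < q)
    (hqhi : q ≤ hi) : ENNReal.ofReal (|f q - f p| - c) + TTV f q hi c ≤ TTV f lo hi c := by
  have : Nonempty (Partition q hi) :=
    ⟨⟨0, fun _ => q, fun i j hij => (hij.ne (Subsingleton.elim (α := Fin 1) i j)).elim,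
      fun _ => ⟨le_rfl, hqhi⟩⟩⟩
  rw [TTV_eq_iSup, TTV_eq_iSup, ENNReal.add_iSup]
  refine iSup_le fun ⟨n, t, ht, htI⟩ => ?_
  have hlo : ∀ {x}, x ∈ Icc q hi → x ∈ Icc lo hi :=
    fun hx => ⟨hlp.trans (hpq.le.trans hx.1), hx.2⟩
  have hp : p ∈ Icc lo hi := ⟨hlp, hpq.le.trans hqhi⟩
  rcases (htI 0).1.eq_or_lt with h0 | h0
  · refine le_iSup_of_le ⟨n + 1, Matrix.vecCons p t, ht.vecCons (h0 ▸ hpq),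
      Fin.forall_fin_succ.2 ⟨hp, fun i => hlo (htI i)⟩⟩ ?_
    rw [partitionSum_vecCons, ← h0]
  · refine le_iSup_of_le ⟨n + 2, Matrix.vecCons p (Matrix.vecCons q t),
      (ht.vecCons h0).vecCons hpq,
      Fin.forall_fin_succ.2 ⟨hp, Fin.forall_fin_succ.2 ⟨hlo ⟨le_rfl, hqhi⟩,
        fun i => hlo (htI i)⟩⟩⟩ ?_
    rw [partitionSum_vecCons, partitionSum_vecCons, Matrix.cons_val_zero]
    gcongr
    exact le_add_self

theorem ofReal_absSum_le_TTV (f : ℝ → ℝ) {c : ℝ} (hc : 0 ≤ c) {hi : ℝ} :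
    ∀ {lo : ℝ} {R : List (ℝ × ℝ)}, IsIntervalChain lo hi R →
      ENNReal.ofReal (absSum f c R) ≤ TTV f lo hi c
  | _, [], _ => by simp [absSum]
  | lo, (p, q) :: R, hR => by
    obtain ⟨hlp, hpq, hqhi, hR⟩ : lo ≤ p ∧ p ≤ q ∧ q ≤ hi ∧ IsIntervalChain q hi R := hR
    rw [absSum_cons,
      ENNReal.ofReal_add (posPart_nonneg _) (q := absSum f c R) (chainSum_nonneg _ R),
      ofReal_posPart]
    rcases hpq.eq_or_lt with rfl | hpq
    · simpa [ENNReal.ofReal_eq_zero.2 (neg_nonpos.2 hc)] using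
        ofReal_absSum_le_TTV f hc (hR.mono_left hlp)
    · calc _ ≤ ENNReal.ofReal (|f q - f p| - c) + TTV f q hi c := by
            gcongr
            exact ofReal_absSum_le_TTV f hc hR
        _ ≤ TTV f lo hi c := ofReal_add_TTV_le f c hlp hpq hqhi

theorem UTV_add_DTV_le_TTV (f : ℝ → ℝ) (a b : ℝ) {c : ℝ} (hc : 0 ≤ c) :
    UTV f a b c + DTV f a b c ≤ TTV f a b c := by
  rw [DTV_eq_UTV_neg, UTV_eq_iSup, UTV_eq_iSup]
  rcases isEmpty_or_nonempty (Partition a b) with h | h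
  · simp
  refine ENNReal.iSup_add_iSup_le fun ⟨n, t, ht, htI⟩ ⟨m, s, hs, hsI⟩ => ?_
  have chain {k} {r : Fin (k + 1) → ℝ} (hr : StrictMono r) (hrI : ∀ i, r i ∈ Icc a b) :
      IsIntervalChain a b (intervalsOf r) :=
    (isIntervalChain_intervalsOf hr.monotone fun i => (hrI i).2).mono_left (hrI 0).1
  obtain ⟨R, hR, hsum⟩ := upDownDominated f c (chain ht htI) (chain hs hsI)
  calc _ = ENNReal.ofReal (upSum f c (intervalsOf t) + upSum (-f) c (intervalsOf s)) := by
        rw [partitionSum_eq_ofReal_chainSum, partitionSum_eq_ofReal_chainSum,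
          ← ENNReal.ofReal_add (chainSum_nonneg _ _) (chainSum_nonneg _ _)]
        rfl
    _ ≤ ENNReal.ofReal (absSum f c R) := ENNReal.ofReal_le_ofReal hsum
    _ ≤ TTV f a b c := ofReal_absSum_le_TTV f hc hR

end TruncatedVariation

end

open TruncatedVariation in
theorem ttv_eq_utv_add_dtv_general (a b c : ℝ) (f : ℝ → ℝ) (hc : 0 < c) :
    TTV f a b c = UTV f a b c + DTV f a b c :=
  (TTV_le_UTV_add_DTV f a b c).antisymm (UTV_add_DTV_le_TTV f a b hc.le)

/-- Jordan-type decomposition of the truncated variation: for regulated `f` and `c > 0`,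
`TTV^c(f,[a,b]) = UTV^c(f,[a,b]) + DTV^c(f,[a,b])`. -/
theorem ttv_eq_utv_add_dtv (a b c : ℝ) (f : ℝ → ℝ) (hab : a < b)
    (hf : Regulated f a b) (hc : 0 < c) :
    TTV f a b c = UTV f a b c + DTV f a b c :=
  ttv_eq_utv_add_dtv_general a b c f hc
end
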